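/- arXiv:math/0607295 — 7 statements merged into one kernel-verified Lean document; each statement's English description precedes it below -/
import Mathlib

section
/- Let G act by isometries on a real tree T. If T itself is indecomposable (as a subtree of itself with the G-action), then the action is minimal: T has no proper nonempty G-invariant subtree. -/
open Pointwise

/-- `MBtw x y z`: `y` lies on the geodesic segment from `x` to `z` (metric betweenness). -/
def MBtw {T : Type*} [MetricSpace T] (x y z : T) : Prop :=
  dist x y + dist y z = dist x z

/-- The (metric) segment from `x` to `z`. -/
def seg {T : Type*} [MetricSpace T] (x z : T) : Set T := {y | MBtw x y z}

/-- A subset is (metrically) convex if it contains the segment between any two of its points. -/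
def MConvex {T : Type*} [MetricSpace T] (S : Set T) : Prop :=
  ∀ x ∈ S, ∀ z ∈ S, seg x z ⊆ S

/-- A real tree: a geodesic metric space which is 0-hyperbolic (four-point condition). -/
class RealTree (T : Type*) [MetricSpace T] : Prop where
  exists_btw : ∀ x z : T, ∀ r ∈ Set.Icc (0 : ℝ) (dist x z), ∃ y, MBtw x y z ∧ dist x y = r
  fourPoint : ∀ x y z w : T,
    dist x y + dist z w ≤ max (dist x z + dist y w) (dist x w + dist y z)

/-- An arc: a nondegenerate segment. -/
def IsArc {T : Type*} [MetricSpace T] (I : Set T) : Prop :=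
  ∃ a b : T, a ≠ b ∧ I = seg a b

/-- A minimal action: no proper nonempty invariant subtree. -/
def MinimalAction (G T : Type*) [Group G] [MetricSpace T] [MulAction G T] : Prop :=
  ∀ Y : Set T, Y.Nonempty → MConvex Y → (∀ g : G, g • Y = Y) → Y = Set.univ

/-- `Y` is an indecomposable subtree for the `G`-action: it is nondegenerate, and every arc
`J ⊆ Y` is covered by finitely many `G`-translates of any arc `I ⊆ Y`, with consecutive
translates overlapping in a nondegenerate intersection. -/
def Indecomposable (G : Type*) {T : Type*} [Group G] [MetricSpace T] [MulAction G T]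
    (Y : Set T) : Prop :=
  (∃ I, IsArc I ∧ I ⊆ Y) ∧
  ∀ I J : Set T, IsArc I → I ⊆ Y → IsArc J → J ⊆ Y →
    ∃ n : ℕ, ∃ g : Fin (n + 1) → G,
      J ⊆ ⋃ i, g i • I ∧
      ∀ i : Fin n, ∃ A, IsArc A ∧ A ⊆ (g i.castSucc • I) ∩ (g i.succ • I)

/-- if the whole tree is indecomposable, the action is minimal. -/
theorem stmt_7 {G T : Type*} [Group G] [MetricSpace T] [RealTree T] [MulAction G T]
    (iso : ∀ g : G, Isometry fun x : T => g • x)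
    (h : Indecomposable G (Set.univ : Set T)) :
    MinimalAction G T := by
  rintro Y ⟨p, hp⟩ hconv hinv
  by_cases hq : ∃ q ∈ Y, q ≠ p
  · obtain ⟨q, hqY, hqp⟩ := hq
    ext x
    simp only [Set.mem_univ, iff_true]
    by_cases hx : x = p
    · exact hx ▸ hp
    · obtain ⟨n, g, hcov, -⟩ := h.2 (seg p q) (seg p x)
        ⟨p, q, Ne.symm hqp, rfl⟩ (Set.subset_univ _)
        ⟨p, x, Ne.symm hx, rfl⟩ (Set.subset_univ _)
      have hxJ : x ∈ seg p x := by simp [seg, MBtw]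
      obtain ⟨i, hxs⟩ := Set.mem_iUnion.mp (hcov hxJ)
      have hIY : seg p q ⊆ Y := hconv p hp q hqY
      have hsub : g i • seg p q ⊆ Y := by
        calc g i • seg p q ⊆ g i • Y := Set.smul_set_mono hIY
          _ = Y := hinv (g i)
      exact hsub hxs
  · push_neg at hq
    have hfix : ∀ g : G, g • p = p := by
      intro g
      have : g • p ∈ Y := by rw [← hinv g]; exact Set.smul_mem_smul_set hp
      exact hq _ this
    exfalso
    obtain ⟨I, ⟨a, b, hab, rfl⟩, -⟩ := h.1
    obtain ⟨q, hqp⟩ : ∃ q : T, q ≠ p := by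
      by_cases h1 : a = p
      · exact ⟨b, by rw [← h1]; exact Ne.symm hab⟩
      · exact ⟨a, h1⟩
    have hd0 : 0 < dist p q := dist_pos.2 (Ne.symm hqp)
    obtain ⟨m, hm, hpm⟩ := RealTree.exists_btw p q (dist p q / 2)
      ⟨by linarith, by linarith⟩
    have hm' : dist p m + dist m q = dist p q := hm
    have hmq : dist m q = dist p q / 2 := by linarith
    have hmq' : m ≠ q := by
      intro hh; rw [hh, dist_self] at hmq; linarith
    obtain ⟨n, g, hcov, -⟩ := h.2 (seg m q) (seg p q)
      ⟨m, q, hmq', rfl⟩ (Set.subset_univ _)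
      ⟨p, q, Ne.symm hqp, rfl⟩ (Set.subset_univ _)
    have hpJ : p ∈ seg p q := by simp [seg, MBtw]
    obtain ⟨i, hps⟩ := Set.mem_iUnion.mp (hcov hpJ)
    obtain ⟨y, hyI, hyp⟩ := hps
    have hy : y = p := by
      have := congrArg (fun z => (g i)⁻¹ • z) hyp
      simpa [hfix ((g i)⁻¹)] using this
    rw [hy] at hyI
    have hpI : dist m p + dist p q = dist m q := hyI
    have := dist_nonneg (x := m) (y := p)
    rw [hmq] at hpI
    linarith
end

section
/- Let 𝒴 be a transverse covering of a G-real-tree T, let Y₀ ∈ 𝒴 with setwise stabilizer H = {g ∈ G : g·Y₀ = Y₀}. If Y₀ is indecomposable as a subtree of T with respect to the G-action, then Y₀ is indecomposable with respect to the H-action: any two arcs of Y₀ satisfy the covering condition using only elements of H. -/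
open Pointwise

/-- A transverse covering of a G-real-tree: a G-invariant family of closed subtrees
covering T, distinct members meeting in at most one point, every arc finitely covered. -/
def TransverseCovering (G : Type*) {T : Type*} [Group G] [MetricSpace T] [MulAction G T]
    (Ys : Set (Set T)) : Prop :=
  (∀ Y ∈ Ys, IsClosed Y ∧ MConvex Y) ∧
  (⋃₀ Ys = Set.univ) ∧
  (∀ g : G, ∀ Y ∈ Ys, g • Y ∈ Ys) ∧
  (∀ Y₁ ∈ Ys, ∀ Y₂ ∈ Ys, Y₁ ≠ Y₂ → (Y₁ ∩ Y₂).Subsingleton) ∧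
  (∀ I : Set T, IsArc I → ∃ F : Set (Set T), F.Finite ∧ F ⊆ Ys ∧ I ⊆ ⋃₀ F)

lemma mem_seg_left {T : Type*} [MetricSpace T] (a b : T) : a ∈ seg a b := by
  simp [seg, MBtw]

lemma mem_seg_right {T : Type*} [MetricSpace T] (a b : T) : b ∈ seg a b := by
  simp [seg, MBtw]

lemma arc_not_subsingleton {T : Type*} [MetricSpace T] {I : Set T} (h : IsArc I) :
    ¬ I.Subsingleton := by
  obtain ⟨a, b, hab, rfl⟩ := h
  exact fun hs => hab (hs (mem_seg_left a b) (mem_seg_right a b))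

lemma arc_infinite {T : Type*} [MetricSpace T] [RealTree T] {I : Set T} (h : IsArc I) :
    I.Infinite := by
  obtain ⟨a, b, hab, rfl⟩ := h
  have hd : (0:ℝ) < dist a b := dist_pos.2 hab
  have : Infinite (Set.Icc (0:ℝ) (dist a b)) :=
    Set.infinite_coe_iff.2 (Set.Icc_infinite hd)
  have hf : ∀ r : Set.Icc (0:ℝ) (dist a b), ∃ y, MBtw a y b ∧ dist a y = r :=
    fun r => RealTree.exists_btw a b r.1 r.2
  choose f hf1 hf2 using hf
  exact Set.infinite_of_injective_forall_mem
    (f := f) (fun r s h => Subtype.ext (by rw [← hf2 r, ← hf2 s, h])) (fun r => hf1 r)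

/-- a member of a transverse covering which is indecomposable for the
G-action is indecomposable for the action of its setwise stabilizer. -/
theorem stmt_10 {G T : Type*} [Group G] [MetricSpace T] [RealTree T] [MulAction G T]
    (iso : ∀ g : G, Isometry fun x : T => g • x)
    (Ys : Set (Set T)) (htc : TransverseCovering G Ys)
    (Y₀ : Set T) (hY₀ : Y₀ ∈ Ys)
    (hind : Indecomposable G Y₀) :
    ∀ I J : Set T, IsArc I → I ⊆ Y₀ → IsArc J → J ⊆ Y₀ →
      ∃ n : ℕ, ∃ g : Fin (n + 1) → G,
        (∀ i, g i • Y₀ = Y₀) ∧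
        J ⊆ ⋃ i, g i • I ∧
        ∀ i : Fin n, ∃ A, IsArc A ∧ A ⊆ (g i.castSucc • I) ∩ (g i.succ • I) := by
  intro I J hI hIY hJ hJY
  obtain ⟨n, g, hcov, hchain⟩ := hind.2 I J hI hIY hJ hJY
  obtain ⟨hclosed, hcover, hinv, hdisj, hfin⟩ := htc
  have hmem : ∀ i : Fin (n + 1), g i • Y₀ ∈ Ys := fun i => hinv _ _ hY₀
  -- consecutive translates of Y₀ are equal
  have hstep : ∀ i : Fin n, g i.castSucc • Y₀ = g i.succ • Y₀ := by
    intro i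
    by_contra hne
    obtain ⟨A, hA, hAsub⟩ := hchain i
    have hsub : A ⊆ (g i.castSucc • Y₀) ∩ (g i.succ • Y₀) :=
      hAsub.trans (Set.inter_subset_inter (Set.smul_set_mono hIY) (Set.smul_set_mono hIY))
    exact arc_not_subsingleton hA
      ((hdisj _ (hmem _) _ (hmem _) hne).anti hsub)
  -- hence all translates equal the first
  have key : ∀ i : Fin (n + 1), g i • Y₀ = g 0 • Y₀ := by
    intro i
    induction i using Fin.induction with
    | zero => rfl
    | succ i ih => rw [← hstep i]; exact ih
  -- some translate equals Y₀
  have hex : ∃ i : Fin (n + 1), g i • Y₀ = Y₀ := by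
    by_contra h
    push_neg at h
    have hJfin : J.Finite := by
      have hsub : J ⊆ ⋃ i : Fin (n + 1), (g i • Y₀) ∩ Y₀ := by
        intro x hx
        obtain ⟨_, ⟨i, rfl⟩, hxi⟩ := hcov hx
        exact Set.mem_iUnion.2 ⟨i, Set.smul_set_mono hIY hxi, hJY hx⟩
      exact Set.Finite.subset
        (Set.finite_iUnion fun i => ((hdisj _ (hmem i) _ hY₀ (h i)).finite)) hsub
    exact arc_infinite hJ hJfin
  obtain ⟨i₀, hi₀⟩ := hex
  exact ⟨n, g, fun i => (key i).trans ((key i₀).symm.trans hi₀), hcov, hchain⟩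
end

section
/- Let G = π₁(Γ) be the fundamental group of a finite graph of groups Γ, and suppose G is finitely generated. Then for every vertex v of Γ, the vertex group G_v is finitely generated relative to the images in G_v of the edge groups of the edges incident to v: there is a finite subset F ⊆ G_v such that F together with these edge-group images generates G_v. -/
/-!
Let `K ≤ G_v` be generated by the stabilizers of the edges at `v` together with a finite set
`S ⊆ G_v`. Unfold the tree `X` over the orbit of `v` along the cosets of `K`: the vertex `g • v`
is replaced by the cosets `g' K` with `g' • v = g • v`, and every edge of `X` is lifted to exactly
one edge, using a transversal of the `G`-orbits of edges. Because `K` contains the edge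
stabilizers, `G` acts on this blow-up, and since every edge has a single lift, the projection to
the tree `X` forces two vertices of one component with the same image to coincide. Lifting a path
from `f • v` to `v` joins the cosets `f K` and `K` as soon as `S` contains the finitely many
elements of `G_v` that glue consecutive lifted edges. Doing this for a finite generating set of
`G` puts every coset `g K` in the component of `K`; for `g ∈ G_v` this forces `g K = K`.
-/

open MulAction

theorem MulAction.smul_mem_orbit_iff {G α : Type*} [Group G] [MulAction G α] {g : G} {a b : α} :
    g • a ∈ orbit G b ↔ a ∈ orbit G b := by
  rw [← orbit_eq_iff, orbit_smul, orbit_eq_iff]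

namespace SimpleGraph

theorem Hom.eq_of_reachable_of_isAcyclic {A B : Type*} {W : SimpleGraph A} {X : SimpleGraph B}
    (φ : W →g X) (hX : X.IsAcyclic)
    (hφ : ∀ ⦃z z' y y' : A⦄, W.Adj z z' → W.Adj y y' → φ z = φ y → φ z' = φ y' → z = y)
    {z z' : A} (h : W.Reachable z z') (hzz' : φ z = φ z') : z = z' := by
  classical
  obtain ⟨p⟩ := h
  have hφe : ∀ e ∈ p.bypass.edges, ∀ e' ∈ p.bypass.edges,
      Sym2.map φ e = Sym2.map φ e' → e = e' := by
    intro e he e' he' heq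
    induction e using Sym2.ind with | _ a b => ?_
    induction e' using Sym2.ind with | _ c d => ?_
    have hab := p.bypass.adj_of_mem_edges he
    have hcd := p.bypass.adj_of_mem_edges he'
    rcases Sym2.eq_iff.1 heq with ⟨h1, h2⟩ | ⟨h1, h2⟩
    · rw [hφ hab hcd h1 h2, hφ hab.symm hcd.symm h2 h1]
    · rw [hφ hab hcd.symm h1 h2, hφ hab.symm hcd h2 h1, Sym2.eq_swap]
  have htrail : (p.bypass.map φ).IsTrail := by
    rw [Walk.isTrail_def, Walk.edges_map]
    exact p.bypass_isPath.isTrail.edges_nodup.map_on hφe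
  have hnil : ((p.bypass.map φ).copy rfl hzz'.symm).Nil :=
    Walk.isPath_iff_nil.1 <| (Walk.isPath_copy _ _ _).2 <| (hX.isPath_iff_isTrail _).2 htrail
  apply Walk.eq_of_length_eq_zero (p := p.bypass)
  simpa using Walk.length_eq_zero_iff.2 hnil

theorem reachable_smul_of_mem_closure {G A : Type*} [Group G] [MulAction G A]
    {W : SimpleGraph A} (hW : ∀ (g : G) ⦃z z' : A⦄, W.Adj z z' → W.Adj (g • z) (g • z'))
    {F : Set G} {z : A} (hF : ∀ f ∈ F, W.Reachable (f • z) z) {g : G}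
    (hg : g ∈ Subgroup.closure F) : W.Reachable (g • z) z := by
  let act (g : G) : W →g W := ⟨(g • ·), fun h => hW g h⟩
  induction hg using Subgroup.closure_induction with
  | mem f hf => exact hF f hf
  | one => rw [one_smul]
  | mul x y _ _ hx hy => rw [mul_smul]; exact (hy.map (act x)).trans hx
  | inv x _ hx => simpa [act] using (hx.map (act x⁻¹)).symm

end SimpleGraph

namespace TreeAction

variable {V G : Type*} [Group G] [MulAction G V]

section Transversal

variable (G) (v : V)

open scoped Classical in
noncomputable def edgeTip (e : V × V) : V :=
  if h : ∃ w, ((v, w) : V × V) ∈ orbit G e then h.choose else v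

noncomputable def edgeTranslator (e : V × V) : G :=
  Classical.epsilon fun g : G => g • ((v, edgeTip G v e) : V × V) = e

variable {G v}

theorem edgeTip_smul (g : G) (e : V × V) : edgeTip G v (g • e) = edgeTip G v e := by
  rw [edgeTip, edgeTip, orbit_smul]

theorem edgeTranslator_smul_pair {e : V × V} (he : e.1 ∈ orbit G v) :
    edgeTranslator G v e • ((v, edgeTip G v e) : V × V) = e := by
  obtain ⟨g, hg : g • v = e.1⟩ := he
  have hrep : ((v, g⁻¹ • e.2) : V × V) ∈ orbit G e :=
    ⟨g⁻¹, Prod.ext (by rw [Prod.smul_fst, ← hg, inv_smul_smul]) rfl⟩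
  have htip : ∃ w, ((v, w) : V × V) ∈ orbit G e := ⟨_, hrep⟩
  obtain ⟨h, hh⟩ : ((v, edgeTip G v e) : V × V) ∈ orbit G e := by
    rw [edgeTip, dif_pos htip]; exact htip.choose_spec
  exact Classical.epsilon_spec (p := fun g : G => g • ((v, edgeTip G v e) : V × V) = e)
    ⟨h⁻¹, by rw [← hh, inv_smul_smul]⟩

theorem edgeTranslator_smul {e : V × V} (he : e.1 ∈ orbit G v) :
    edgeTranslator G v e • v = e.1 :=
  congrArg Prod.fst (edgeTranslator_smul_pair he)

theorem adj_edgeTip {X : SimpleGraph V}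
    (hact : ∀ (g : G) (u w : V), X.Adj u w → X.Adj (g • u) (g • w))
    {e : V × V} (he : e.1 ∈ orbit G v) (hadj : X.Adj e.1 e.2) : X.Adj v (edgeTip G v e) := by
  obtain ⟨h1, h2⟩ := Prod.ext_iff.1 (edgeTranslator_smul_pair he)
  have := hact (edgeTranslator G v e)⁻¹ _ _ hadj
  rwa [← h1, ← h2, Prod.smul_fst, Prod.smul_snd, inv_smul_smul, inv_smul_smul] at this

theorem edgeTranslator_smul_mem_stabilizer {e : V × V} (he : e.1 ∈ orbit G v) (g : G) :
    (edgeTranslator G v (g • e))⁻¹ * (g * edgeTranslator G v e) ∈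
      stabilizer G v ⊓ stabilizer G (edgeTip G v e) := by
  have hge : (g • e).1 ∈ orbit G v := smul_mem_orbit_iff.2 he
  have hfix : ((edgeTranslator G v (g • e))⁻¹ * (g * edgeTranslator G v e)) •
      ((v, edgeTip G v e) : V × V) = (v, edgeTip G v e) := by
    rw [mul_smul, mul_smul, edgeTranslator_smul_pair he, inv_smul_eq_iff, ← edgeTip_smul g e,
      edgeTranslator_smul_pair hge]
  exact ⟨congrArg Prod.fst hfix, congrArg Prod.snd hfix⟩

end Transversal

section BlowUp

variable {X : SimpleGraph V} {v : V} {K : Subgroup G}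

variable (v K) in
open scoped Classical in
/-- The vertex of the blow-up at which the lift of the edge `a → d` starts. -/
noncomputable def blowUpLift (a d : V) : (G ⧸ K) ⊕ V :=
  if a ∈ orbit G v then .inl (edgeTranslator G v (a, d)) else .inr a

noncomputable def blowUpProj (hK : K ≤ stabilizer G v) : (G ⧸ K) ⊕ V → V :=
  Sum.elim (fun c => ofQuotientStabilizer G v (Subgroup.quotientMapOfLE hK c)) id

theorem blowUpProj_inl_mk (hK : K ≤ stabilizer G v) (g : G) :
    blowUpProj hK (.inl (g : G ⧸ K)) = g • v :=
  ofQuotientStabilizer_mk G v g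

theorem blowUpProj_blowUpLift (hK : K ≤ stabilizer G v) (a d : V) :
    blowUpProj hK (blowUpLift v K a d) = a := by
  by_cases ha : a ∈ orbit G v
  · rw [blowUpLift, if_pos ha, blowUpProj_inl_mk, edgeTranslator_smul ha]
  · rw [blowUpLift, if_neg ha]
    rfl

variable (X) in
/-- The vertices `.inr a` with `a` in the orbit of `v` are isolated. -/
def blowUp (hK : K ≤ stabilizer G v) : SimpleGraph ((G ⧸ K) ⊕ V) where
  Adj z z' := ∃ a b, X.Adj a b ∧ blowUpLift v K a b = z ∧ blowUpLift v K b a = z'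
  symm := ⟨fun _ _ ⟨a, b, hab, h, h'⟩ => ⟨b, a, hab.symm, h', h⟩⟩
  loopless := ⟨fun _ ⟨a, b, hab, h, h'⟩ => hab.ne <| by
    rw [← blowUpProj_blowUpLift hK a b, h, ← h', blowUpProj_blowUpLift]⟩

variable (X) in
noncomputable def blowUpProjHom (hK : K ≤ stabilizer G v) : blowUp X hK →g X where
  toFun := blowUpProj hK
  map_rel' := by
    rintro _ _ ⟨a, b, hab, rfl, rfl⟩
    rwa [blowUpProj_blowUpLift, blowUpProj_blowUpLift]

theorem eq_blowUpLift_of_adj {hK : K ≤ stabilizer G v} {z z' : (G ⧸ K) ⊕ V}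
    (h : (blowUp X hK).Adj z z') : z = blowUpLift v K (blowUpProj hK z) (blowUpProj hK z') := by
  obtain ⟨a, b, -, rfl, rfl⟩ := h
  rw [blowUpProj_blowUpLift, blowUpProj_blowUpLift]

theorem smul_blowUpLift (hact : ∀ (g : G) (u w : V), X.Adj u w → X.Adj (g • u) (g • w))
    (hKE : ∀ w, X.Adj v w → stabilizer G v ⊓ stabilizer G w ≤ K) {a b : V} (hab : X.Adj a b)
    (g : G) : g • blowUpLift v K a b = blowUpLift v K (g • a) (g • b) := by
  by_cases ha : a ∈ orbit G v
  · rw [blowUpLift, blowUpLift, if_pos ha, if_pos (smul_mem_orbit_iff.2 ha), Sum.smul_inl]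
    congr 1
    exact (QuotientGroup.eq.2 <| hKE _ (adj_edgeTip hact ha hab)
      (edgeTranslator_smul_mem_stabilizer (e := (a, b)) ha g)).symm
  · rw [blowUpLift, blowUpLift, if_neg ha, if_neg (mt smul_mem_orbit_iff.1 ha)]
    rfl

theorem blowUp_adj_smul (hact : ∀ (g : G) (u w : V), X.Adj u w → X.Adj (g • u) (g • w))
    {hK : K ≤ stabilizer G v} (hKE : ∀ w, X.Adj v w → stabilizer G v ⊓ stabilizer G w ≤ K)
    (g : G) ⦃z z' : (G ⧸ K) ⊕ V⦄ (h : (blowUp X hK).Adj z z') :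
    (blowUp X hK).Adj (g • z) (g • z') := by
  obtain ⟨a, b, hab, rfl, rfl⟩ := h
  exact ⟨g • a, g • b, hact g a b hab, (smul_blowUpLift hact hKE hab g).symm,
    (smul_blowUpLift hact hKE hab.symm g).symm⟩

theorem stabilizer_le_of_reachable (hX : X.IsAcyclic) (hK : K ≤ stabilizer G v)
    (hreach : ∀ g ∈ stabilizer G v,
      (blowUp X hK).Reachable (g • .inl ((1 : G) : G ⧸ K)) (.inl ((1 : G) : G ⧸ K))) :
    stabilizer G v ≤ K := by
  intro g hg
  have hlift := (blowUpProjHom X hK).eq_of_reachable_of_isAcyclic hX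
    (fun _ _ _ _ h h' e e' => by
      rw [eq_blowUpLift_of_adj h, eq_blowUpLift_of_adj h']; exact congrArg₂ _ e e')
    (hreach g hg) (by simp [blowUpProjHom, blowUpProj_inl_mk, mem_stabilizer_iff.1 hg])
  simpa using QuotientGroup.eq.1 (Sum.inl_injective hlift)

end BlowUp

section Gluing

variable (G) {X : SimpleGraph V} (v : V)

open scoped Classical in
/-- It lies in `K` exactly when the lifts of the edges `a → d` and `a → a'` start at the same
vertex of the blow-up. -/
noncomputable def junction (a d a' : V) : G :=
  if a ∈ orbit G v then (edgeTranslator G v (a, d))⁻¹ * edgeTranslator G v (a, a') else 1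

/-- The junctions along a walk to `v` entered from `d`; the last element glues the final lift
to the coset `K`. -/
noncomputable def junctions : {a : V} → V → X.Walk a v → List G
  | _, d, .nil => [edgeTranslator G v (v, d)]
  | a, d, .cons (v := a') _ p => junction G v a d a' :: junctions a p

/-- The first element glues the coset `g K` to the start of the lifted walk; entering `g • v`
from itself is an arbitrary choice of direction. -/
noncomputable def gluing (g : G) (p : X.Walk (g • v) v) : List G :=
  g⁻¹ * edgeTranslator G v (g • v, g • v) :: junctions G v (g • v) p

variable {G v}

theorem junction_mem_stabilizer (a d a' : V) : junction G v a d a' ∈ stabilizer G v := by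
  by_cases ha : a ∈ orbit G v
  · rw [junction, if_pos ha, mem_stabilizer_iff, mul_smul, edgeTranslator_smul ha,
      inv_smul_eq_iff, edgeTranslator_smul ha]
  · rw [junction, if_neg ha]
    exact one_mem _

theorem blowUpLift_eq_of_junction_mem {K : Subgroup G} {a d a' : V}
    (h : junction G v a d a' ∈ K) : blowUpLift v K a d = blowUpLift v K a a' := by
  by_cases ha : a ∈ orbit G v
  · rw [junction, if_pos ha] at h
    rw [blowUpLift, blowUpLift, if_pos ha, if_pos ha, QuotientGroup.eq.2 h]
  · rw [blowUpLift, blowUpLift, if_neg ha, if_neg ha]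

theorem junctions_subset_stabilizer :
    ∀ {a : V} (d : V) (p : X.Walk a v), ∀ k ∈ junctions G v d p, k ∈ stabilizer G v
  | _, d, .nil => by
    simpa [junctions] using edgeTranslator_smul (G := G) (e := (v, d)) (mem_orbit_self v)
  | a, d, .cons _ p => by
    simpa [junctions] using
      ⟨junction_mem_stabilizer _ _ _, junctions_subset_stabilizer a p⟩

theorem gluing_subset_stabilizer (g : G) (p : X.Walk (g • v) v) :
    ∀ k ∈ gluing G v g p, k ∈ stabilizer G v := by
  rw [gluing, List.forall_mem_cons, mem_stabilizer_iff, mul_smul, inv_smul_eq_iff,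
    edgeTranslator_smul (mem_orbit _ g)]
  exact ⟨rfl, junctions_subset_stabilizer _ _⟩

theorem reachable_of_junctions_subset {K : Subgroup G} (hK : K ≤ stabilizer G v) :
    ∀ {a : V} (d : V) (p : X.Walk a v), (∀ k ∈ junctions G v d p, k ∈ K) →
      (blowUp X hK).Reachable (blowUpLift v K a d) (.inl ((1 : G) : G ⧸ K))
  | _, d, .nil, hJ => by
    have hd : ((edgeTranslator G v (v, d) : G) : G ⧸ K) = ((1 : G) : G ⧸ K) :=
      QuotientGroup.eq.2 (by simpa using K.inv_mem (hJ _ (by simp [junctions])))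
    rw [blowUpLift, if_pos (mem_orbit_self v), hd]
  | a, d, .cons (v := a') hadj p, hJ => by
    rw [junctions, List.forall_mem_cons] at hJ
    rw [blowUpLift_eq_of_junction_mem hJ.1]
    exact (show (blowUp X hK).Adj _ _ from ⟨a, a', hadj, rfl, rfl⟩).reachable.trans
      (reachable_of_junctions_subset hK a p hJ.2)

theorem reachable_of_gluing_subset {K : Subgroup G} (hK : K ≤ stabilizer G v) {g : G}
    (p : X.Walk (g • v) v) (hJ : ∀ k ∈ gluing G v g p, k ∈ K) :
    (blowUp X hK).Reachable (g • .inl ((1 : G) : G ⧸ K)) (.inl ((1 : G) : G ⧸ K)) := by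
  rw [gluing, List.forall_mem_cons] at hJ
  have hstart : blowUpLift v K (g • v) (g • v) = g • .inl ((1 : G) : G ⧸ K) := by
    rw [blowUpLift, if_pos (mem_orbit _ g), Sum.smul_inl, MulAction.Quotient.smul_mk,
      smul_eq_mul, mul_one, QuotientGroup.eq.2 (by simpa using K.inv_mem hJ.1)]
  exact hstart ▸ reachable_of_junctions_subset hK (g • v) p hJ.2

end Gluing

end TreeAction

open TreeAction

theorem stmt_12_general {V G : Type*} [Group G] [MulAction G V] (X : SimpleGraph V)
    (htree : X.IsTree)
    (hact : ∀ (g : G) (u v : V), X.Adj u v → X.Adj (g • u) (g • v))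
    (hfg : Group.FG G)
    (v : V) :
    ∃ S : Finset G, (↑S : Set G) ⊆ (MulAction.stabilizer G v : Set G) ∧
      Subgroup.closure ((↑S : Set G) ∪
          ⋃ w ∈ X.neighborSet v,
            ((MulAction.stabilizer G v ⊓ MulAction.stabilizer G w : Subgroup G) : Set G)) =
        MulAction.stabilizer G v := by
  classical
  obtain ⟨F, hF⟩ := hfg.out
  have walk (g : G) : X.Walk (g • v) v := (htree.connected.preconnected _ _).some
  let S : Finset G := F.biUnion fun f => (gluing G v f (walk f)).toFinset
  have hSv : (S : Set G) ⊆ stabilizer G v := fun s hs => by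
    obtain ⟨f, -, hs⟩ := Finset.mem_biUnion.1 hs
    exact gluing_subset_stabilizer f (walk f) s (List.mem_toFinset.1 hs)
  set K := Subgroup.closure ((S : Set G) ∪ ⋃ w ∈ X.neighborSet v,
    ((stabilizer G v ⊓ stabilizer G w : Subgroup G) : Set G))
  have hKv : K ≤ stabilizer G v :=
    Subgroup.closure_le _ |>.2 <| Set.union_subset hSv <| Set.iUnion₂_subset fun _ _ => inf_le_left
  have hKE (w : V) (hw : X.Adj v w) : stabilizer G v ⊓ stabilizer G w ≤ K := fun _ hk =>
    Subgroup.subset_closure <| Or.inr <| Set.mem_iUnion₂.2 ⟨w, hw, hk⟩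
  refine ⟨S, hSv, le_antisymm hKv <| stabilizer_le_of_reachable htree.isAcyclic hKv fun g _ =>
    SimpleGraph.reachable_smul_of_mem_closure (blowUp_adj_smul hact hKE) (fun f hf => ?_)
      (hF ▸ Subgroup.mem_top g)⟩
  exact reachable_of_gluing_subset hKv (walk f) fun s hs =>
    Subgroup.subset_closure <| Or.inl <| Finset.mem_biUnion.2 ⟨f, hf, List.mem_toFinset.2 hs⟩

/-- Bass–Serre formulation: if a finitely generated group G acts without
inversions and cofinitely on a simplicial tree X (finitely many orbits of vertices and of
edges), then each vertex stabilizer is generated by a finite set together with the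
stabilizers of the incident edges. -/
theorem stmt_12 {V G : Type*} [Group G] [MulAction G V] (X : SimpleGraph V)
    (htree : X.IsTree)
    (hact : ∀ (g : G) (u v : V), X.Adj u v → X.Adj (g • u) (g • v))
    (hni : ∀ (g : G) (u v : V), X.Adj u v → ¬ (g • u = v ∧ g • v = u))
    (hfg : Group.FG G)
    (hvfin : Finite (Quotient (MulAction.orbitRel G V)))
    (hefin : ∃ E₀ : Finset (V × V), ∀ u w : V, X.Adj u w →
      ∃ g : G, ∃ p ∈ E₀, (g • p.1 = u ∧ g • p.2 = w) ∨ (g • p.1 = w ∧ g • p.2 = u))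
    (v : V) :
    ∃ S : Finset G, (↑S : Set G) ⊆ (MulAction.stabilizer G v : Set G) ∧
      Subgroup.closure ((↑S : Set G) ∪
          ⋃ w ∈ X.neighborSet v,
            ((MulAction.stabilizer G v ⊓ MulAction.stabilizer G w : Subgroup G) : Set G)) =
        MulAction.stabilizer G v :=
  stmt_12_general X htree hact hfg v
end

section
/- Suppose a real tree T with an isometric G-action admits a transverse covering 𝒴, and T is finitely supported (spanned by a finite tree). Then for every Y₀ ∈ 𝒴, the action of the setwise stabilizer of Y₀ on Y₀ is finitely supported: Y₀ is spanned by a finite tree under translates by the setwise stabilizer of Y₀. -/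
open Pointwise

/-- The convex hull in a metric space: the intersection of all convex sets containing A. -/
def mhull {T : Type*} [MetricSpace T] (A : Set T) : Set T :=
  ⋂₀ {C : Set T | MConvex C ∧ A ⊆ C}

section aux
variable {T : Type*} [MetricSpace T]

lemma mem_seg {x y z : T} : y ∈ seg x z ↔ dist x y + dist y z = dist x z := Iff.rfl

lemma left_mem_seg (x z : T) : x ∈ seg x z := by simp [mem_seg]

lemma right_mem_seg (x z : T) : z ∈ seg x z := by simp [mem_seg]

lemma seg_comm (x z : T) : seg x z = seg z x := by
  ext y
  simp only [mem_seg, dist_comm x y, dist_comm y z, dist_comm x z]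
  constructor <;> intro h <;> linarith

lemma seg_self (x : T) : seg x x = {x} := by
  ext y; simp only [mem_seg, Set.mem_singleton_iff, dist_self]
  constructor
  · intro h
    have h2 : dist x y = 0 := by
      have := dist_nonneg (x := x) (y := y)
      have := dist_nonneg (x := y) (y := x)
      have := dist_comm x y
      linarith
    exact (dist_eq_zero.mp h2).symm
  · rintro rfl; simp

lemma isClosed_seg (x z : T) : IsClosed (seg x z) := by
  have : seg x z = (fun y => dist x y + dist y z) ⁻¹' {dist x z} := rfl
  rw [this]
  exact IsClosed.preimage
    ((Continuous.dist continuous_const continuous_id).add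
      (Continuous.dist continuous_id continuous_const)) isClosed_singleton

lemma seg_trans {a b z : T} (h : z ∈ seg a b) : seg a z ⊆ seg a b := by
  intro y hy
  simp only [mem_seg] at *
  have h1 : dist a y + dist y b ≤ dist a b := by
    have := dist_triangle y z b
    linarith
  have h2 := dist_triangle a y b
  linarith

/-- L1 -/
lemma dist_of_mem_seg [RealTree T] {a b y y' : T} (hy : y ∈ seg a b) (hy' : y' ∈ seg a b) :
    dist y y' = |dist a y - dist a y'| := by
  simp only [mem_seg] at hy hy'
  have hfp := RealTree.fourPoint y y' a b
  have habs : |dist a y - dist a y'| ≤ dist y y' := by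
    have := abs_dist_sub_le y y' a
    rwa [dist_comm y a, dist_comm y' a] at this
  have c1 : dist y a = dist a y := dist_comm _ _
  have c2 : dist y' a = dist a y' := dist_comm _ _
  rcases le_max_iff.mp hfp with h | h
  · have h2 : dist y y' ≤ dist a y - dist a y' := by linarith
    exact le_antisymm (h2.trans (le_abs_self _)) habs
  · have h2 : dist y y' ≤ -(dist a y - dist a y') := by linarith
    exact le_antisymm (h2.trans (neg_le_abs _)) habs

/-- C1 -/
lemma seg_subset_union [RealTree T] (a x z : T) : seg x z ⊆ seg x a ∪ seg a z := by
  intro y hy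
  simp only [mem_seg] at hy
  have hfp := RealTree.fourPoint a y x z
  have c1 : dist a x = dist x a := dist_comm _ _
  have c2 : dist y x = dist x y := dist_comm _ _
  have c3 : dist a y = dist y a := dist_comm _ _
  rcases le_max_iff.mp hfp with h | h
  · left
    have ht := dist_triangle x y a
    simp only [mem_seg]
    linarith
  · right
    have ht := dist_triangle a y z
    simp only [mem_seg]
    linarith

lemma mconvex_seg [RealTree T] (a b : T) : MConvex (seg a b) := by
  intro x hx z hz y hy
  have hxz : dist x z = |dist a x - dist a z| := dist_of_mem_seg hx hz
  simp only [mem_seg] at *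
  have h4 := dist_triangle a y b
  rcases abs_cases (dist a x - dist a z) with ⟨he, _⟩ | ⟨he, _⟩
  · have h1 : dist a y ≤ dist a z + dist z y := dist_triangle a z y
    have h2 : dist y b ≤ dist y x + dist x b := dist_triangle y x b
    have c1 : dist z y = dist y z := dist_comm _ _
    have c2 : dist y x = dist x y := dist_comm _ _
    linarith
  · have h1 : dist a y ≤ dist a x + dist x y := dist_triangle a x y
    have h2 : dist y b ≤ dist y z + dist z b := dist_triangle y z b
    linarith
end aux

section aux2
variable {T : Type*} [MetricSpace T]

lemma mconvex_mhull (C : Set T) : MConvex (mhull C) := by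
  intro x hx z hz y hy D hD
  exact hD.1 x (hx D hD) z (hz D hD) hy

lemma subset_mhull (C : Set T) : C ⊆ mhull C := fun x hx D hD => hD.2 hx

lemma mhull_min {C D : Set T} (hD : MConvex D) (h : C ⊆ D) : mhull C ⊆ D :=
  Set.sInter_subset_of_mem ⟨hD, h⟩

lemma mhull_mono {C D : Set T} (h : C ⊆ D) : mhull C ⊆ mhull D :=
  mhull_min (mconvex_mhull D) (h.trans (subset_mhull D))

lemma seg_subset_mhull {C : Set T} {p q : T} (hp : p ∈ C) (hq : q ∈ C) :
    seg p q ⊆ mhull C :=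
  mconvex_mhull C p (subset_mhull C hp) q (subset_mhull C hq)

/-- The union of segments between points of C. -/
def segUnion (C : Set T) : Set T := ⋃ p ∈ C, ⋃ q ∈ C, seg p q

lemma mconvex_segUnion [RealTree T] (C : Set T) : MConvex (segUnion C) := by
  intro x hx z hz y hy
  simp only [segUnion, Set.mem_iUnion] at hx hz ⊢
  obtain ⟨b₁, hb₁, b₂, hb₂, hx⟩ := hx
  obtain ⟨b₃, hb₃, b₄, hb₄, hz⟩ := hz
  rcases seg_subset_union b₃ x z hy with h | h
  · rw [seg_comm] at h
    rcases seg_subset_union b₁ b₃ x h with h2 | h2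
    · exact ⟨b₃, hb₃, b₁, hb₁, h2⟩
    · exact ⟨b₁, hb₁, b₂, hb₂, seg_trans hx h2⟩
  · exact ⟨b₃, hb₃, b₄, hb₄, seg_trans hz h⟩

lemma mhull_eq_segUnion [RealTree T] (C : Set T) : mhull C = segUnion C := by
  apply le_antisymm
  · exact mhull_min (mconvex_segUnion C) (fun p hp => by
      simp only [segUnion, Set.mem_iUnion]
      exact ⟨p, hp, p, hp, left_mem_seg p p⟩)
  · intro y hy
    simp only [segUnion, Set.mem_iUnion] at hy
    obtain ⟨p, hp, q, hq, hy⟩ := hy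
    exact seg_subset_mhull hp hq hy

/-- L5: endpoints of a closed subset of a segment. -/
lemma exists_endpoints [RealTree T] {Y : Set T} (hY : IsClosed Y) (u v : T)
    (hne : (Y ∩ seg u v).Nonempty) :
    ∃ p q, p ∈ Y ∩ seg u v ∧ q ∈ Y ∩ seg u v ∧ Y ∩ seg u v ⊆ seg p q := by
  set C := Y ∩ seg u v with hC
  set R := (dist u) '' C with hR
  have hRne : R.Nonempty := hne.image _
  have hRb : ∀ r ∈ R, 0 ≤ r ∧ r ≤ dist u v := by
    rintro r ⟨c, hc, rfl⟩
    refine ⟨dist_nonneg, ?_⟩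
    have := hc.2
    rw [mem_seg] at this
    linarith [dist_nonneg (x := c) (y := v)]
  have hbdd : BddAbove R := ⟨dist u v, fun r hr => (hRb r hr).2⟩
  have hbdd' : BddBelow R := ⟨0, fun r hr => (hRb r hr).1⟩
  set r₁ := sInf R with hr₁
  set r₂ := sSup R with hr₂
  have hr₁mem : r₁ ∈ Set.Icc (0:ℝ) (dist u v) := by
    obtain ⟨r, hr⟩ := id hRne
    exact ⟨le_csInf hRne (fun r hr => (hRb r hr).1), le_trans (csInf_le hbdd' hr) (hRb r hr).2⟩
  have hr₂mem : r₂ ∈ Set.Icc (0:ℝ) (dist u v) := by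
    obtain ⟨r, hr⟩ := id hRne
    exact ⟨le_trans (hRb r hr).1 (le_csSup hbdd hr), csSup_le hRne (fun r hr => (hRb r hr).2)⟩
  obtain ⟨p, hpseg, hpd⟩ := RealTree.exists_btw u v r₁ hr₁mem
  obtain ⟨q, hqseg, hqd⟩ := RealTree.exists_btw u v r₂ hr₂mem
  have hCclosed : IsClosed C := hY.inter (isClosed_seg u v)
  have hkey : ∀ c ∈ C, dist u c = dist u c := fun _ _ => rfl
  have hpC : p ∈ C := by
    rw [← hCclosed.closure_eq]
    rw [Metric.mem_closure_iff]
    intro ε hε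
    obtain ⟨r, hrR, hrlt⟩ := exists_lt_of_csInf_lt hRne (by linarith : sInf R < r₁ + ε)
    obtain ⟨c, hc, rfl⟩ := hrR
    refine ⟨c, hc, ?_⟩
    have hd : dist p c = |dist u p - dist u c| := dist_of_mem_seg hpseg hc.2
    have hge : r₁ ≤ dist u c := csInf_le hbdd' ⟨c, hc, rfl⟩
    rw [hd, hpd, abs_of_nonpos (by linarith)]
    linarith
  have hqC : q ∈ C := by
    rw [← hCclosed.closure_eq, Metric.mem_closure_iff]
    intro ε hε
    obtain ⟨r, hrR, hrlt⟩ := exists_lt_of_lt_csSup hRne (by linarith : r₂ - ε < sSup R)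
    obtain ⟨c, hc, rfl⟩ := hrR
    refine ⟨c, hc, ?_⟩
    have hd : dist q c = |dist u q - dist u c| := dist_of_mem_seg hqseg hc.2
    have hle : dist u c ≤ r₂ := le_csSup hbdd ⟨c, hc, rfl⟩
    rw [hd, hqd, abs_of_nonneg (by linarith)]
    linarith
  refine ⟨p, q, hpC, hqC, ?_⟩
  intro c hc
  have h1 : r₁ ≤ dist u c := csInf_le hbdd' ⟨c, hc, rfl⟩
  have h2 : dist u c ≤ r₂ := le_csSup hbdd ⟨c, hc, rfl⟩
  have hd1 : dist p c = |dist u p - dist u c| := dist_of_mem_seg hpseg hc.2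
  have hd2 : dist c q = |dist u c - dist u q| := dist_of_mem_seg hc.2 hqseg
  have hd3 : dist p q = |dist u p - dist u q| := dist_of_mem_seg hpseg hqseg
  rw [mem_seg, hd1, hd2, hd3, hpd, hqd, abs_of_nonpos (by linarith),
    abs_of_nonpos (by linarith), abs_of_nonpos (by linarith)]
  ring

/-- density: a segment minus a finite set is dense in the segment. -/
lemma seg_subset_closure_diff [RealTree T] {a b : T} (hab : a ≠ b) {E : Set T}
    (hE : E.Finite) : seg a b ⊆ closure (seg a b \ E) := by
  intro x hx
  rw [Metric.mem_closure_iff]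
  intro ε hε
  have hd : 0 < dist a b := dist_pos.mpr hab
  have hx' := hx
  rw [mem_seg] at hx'
  have hx0 : 0 ≤ dist a x := dist_nonneg
  have hxd : dist a x ≤ dist a b := by linarith [dist_nonneg (x := x) (y := b)]
  -- choose an open interval J ⊆ [0, dist a b] near dist a x
  obtain ⟨l, u, hlu, hsub, hnear⟩ :
      ∃ l u : ℝ, l < u ∧ Set.Ioo l u ⊆ Set.Icc 0 (dist a b) ∧
        ∀ r ∈ Set.Ioo l u, |dist a x - r| < ε := by
    rcases lt_or_ge (dist a x) (dist a b) with h | h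
    · refine ⟨dist a x, min (dist a b) (dist a x + ε), by simp [h, hε], ?_, ?_⟩
      · rintro r ⟨h1, h2⟩
        exact ⟨by linarith, le_of_lt (lt_of_lt_of_le h2 (min_le_left _ _))⟩
      · rintro r ⟨h1, h2⟩
        have := lt_of_lt_of_le h2 (min_le_right _ _)
        rw [abs_of_nonpos (by linarith)]
        linarith
    · have hxe : dist a x = dist a b := le_antisymm hxd h
      refine ⟨max 0 (dist a b - ε), dist a b, by simp [hd, hε], ?_, ?_⟩
      · rintro r ⟨h1, h2⟩
        exact ⟨le_of_lt (lt_of_le_of_lt (le_max_left _ _) h1), le_of_lt h2⟩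
      · rintro r ⟨h1, h2⟩
        have := lt_of_le_of_lt (le_max_right _ _) h1
        rw [hxe, abs_of_nonneg (by linarith)]
        linarith
  have hinf : (Set.Ioo l u).Infinite := Set.infinite_coe_iff.mp (Set.Ioo.infinite hlu)
  have : (Set.Ioo l u \ (fun e => dist a e) '' E).Infinite :=
    hinf.diff (hE.image _)
  obtain ⟨r, hr⟩ := this.nonempty
  obtain ⟨y, hyseg, hyd⟩ := RealTree.exists_btw a b r (hsub hr.1)
  refine ⟨y, ⟨hyseg, ?_⟩, ?_⟩
  · intro hyE
    exact hr.2 ⟨y, hyE, hyd⟩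
  · have := dist_of_mem_seg hx hyseg
    rw [this, hyd]
    exact hnear r hr.1

end aux2

section smul
variable {G T : Type*} [Group G] [MetricSpace T] [MulAction G T]

lemma dist_smul' (iso : ∀ g : G, Isometry fun x : T => g • x) (g : G) (x y : T) :
    dist (g • x) (g • y) = dist x y := (iso g).dist_eq x y

lemma smul_seg (iso : ∀ g : G, Isometry fun x : T => g • x) (g : G) (u v : T) :
    g • seg u v = seg (g • u) (g • v) := by
  ext x
  rw [Set.mem_smul_set_iff_inv_smul_mem, mem_seg, mem_seg]
  have h1 : dist u (g⁻¹ • x) = dist (g • u) x := by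
    rw [← dist_smul' iso g, smul_inv_smul]
  have h2 : dist (g⁻¹ • x) v = dist x (g • v) := by
    rw [← dist_smul' iso g, smul_inv_smul]
  rw [h1, h2, ← dist_smul' iso g u v]

lemma isClosed_smul (iso : ∀ g : G, Isometry fun x : T => g • x) (g : G) {Z : Set T}
    (hZ : IsClosed Z) : IsClosed (g • Z) := by
  have : g • Z = (fun x : T => g⁻¹ • x) ⁻¹' Z := by
    ext x
    rw [Set.mem_smul_set_iff_inv_smul_mem, Set.mem_preimage]
  rw [this]
  exact hZ.preimage (iso g⁻¹).continuous

lemma isClosed_segUnion_of_finite {C : Set T} (hC : C.Finite) : IsClosed (segUnion C) :=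
  hC.isClosed_biUnion (fun p _ => hC.isClosed_biUnion (fun q _ => isClosed_seg p q))

end smul


/-- if a finitely supported tree has a transverse covering, then each member
is finitely supported under its setwise stabilizer. -/
theorem stmt_14 {G T : Type*} [Group G] [MetricSpace T] [RealTree T] [MulAction G T]
    (iso : ∀ g : G, Isometry fun x : T => g • x)
    (Ys : Set (Set T)) (htc : TransverseCovering G Ys)
    (hsupp : ∃ B : Finset T, ∀ I : Set T, IsArc I →
      ∃ S : Finset G, I ⊆ ⋃ g ∈ S, g • mhull (↑B : Set T))
    (Y₀ : Set T) (hY₀ : Y₀ ∈ Ys) :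
    ∃ A : Finset T, (↑A : Set T) ⊆ Y₀ ∧
      ∀ I : Set T, IsArc I → I ⊆ Y₀ →
        ∃ S : Finset G, (∀ g ∈ S, g • Y₀ = Y₀) ∧ I ⊆ ⋃ g ∈ S, g • mhull (↑A : Set T) := by
  classical
  obtain ⟨hclosed, hcover, hinv, htrans, hfin⟩ := htc
  obtain ⟨B, hB⟩ := hsupp
  have hY₀closed : IsClosed Y₀ := (hclosed Y₀ hY₀).1
  -- finite cover of each segment by members of Ys
  have hcov : ∀ u v : T, ∃ F : Set (Set T), F.Finite ∧ F ⊆ Ys ∧ seg u v ⊆ ⋃₀ F := by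
    intro u v
    by_cases huv : u = v
    · subst huv
      have hu : u ∈ ⋃₀ Ys := by rw [hcover]; trivial
      obtain ⟨Y, hY, huY⟩ := hu
      refine ⟨{Y}, Set.finite_singleton _, by simpa using hY, ?_⟩
      rw [seg_self]
      intro y hy
      rw [Set.mem_singleton_iff] at hy
      subst hy
      exact ⟨Y, Set.mem_singleton _, huY⟩
    · exact hfin _ ⟨u, v, huv, rfl⟩
  choose Fc hFcfin hFcYs hFcsub using hcov
  set F : Set (Set T) := ⋃ u ∈ (↑B : Set T), ⋃ v ∈ (↑B : Set T), Fc u v with hF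
  have hFfin : F.Finite :=
    B.finite_toSet.biUnion (fun u _ => B.finite_toSet.biUnion (fun v _ => hFcfin u v))
  have hFYs : F ⊆ Ys := by
    intro Y hY
    simp only [hF, Set.mem_iUnion] at hY
    obtain ⟨u, _, v, _, hY⟩ := hY
    exact hFcYs u v hY
  have hUF : segUnion (↑B : Set T) ⊆ ⋃₀ F := by
    intro x hx
    simp only [segUnion, Set.mem_iUnion] at hx
    obtain ⟨u, hu, v, hv, hx⟩ := hx
    obtain ⟨Y, hY, hxY⟩ := hFcsub u v hx
    exact ⟨Y, by simp only [hF, Set.mem_iUnion]; exact ⟨u, hu, v, hv, hY⟩, hxY⟩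
  set Fs := hFfin.toFinset with hFs
  -- choice of orbit representatives
  set γ : Set T → G := fun Y' => if h : ∃ g : G, g • Y₀ = Y' then h.choose else 1 with hγdef
  have hγ : ∀ Y' : Set T, (∃ g : G, g • Y₀ = Y') → γ Y' • Y₀ = Y' := by
    intro Y' h
    simp only [hγdef, dif_pos h]
    exact h.choose_spec
  -- endpoints of the pieces
  have key : ∀ u v : T, ∃ s : Finset T, (↑s : Set T) ⊆ Y₀ ∧
      Y₀ ∩ seg u v ⊆ mhull (↑s : Set T) := by
    intro u v
    by_cases h : (Y₀ ∩ seg u v).Nonempty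
    · obtain ⟨p, q, hp, hq, hsub⟩ := exists_endpoints hY₀closed u v h
      refine ⟨{p, q}, ?_, ?_⟩
      · intro x hx
        simp only [Finset.coe_insert, Finset.coe_singleton, Set.mem_insert_iff,
          Set.mem_singleton_iff] at hx
        rcases hx with rfl | rfl
        exacts [hp.1, hq.1]
      · refine hsub.trans (seg_subset_mhull ?_ ?_) <;> simp
    · rw [Set.not_nonempty_iff_eq_empty] at h
      exact ⟨∅, by simp, by simp [h]⟩
  choose ept heptY₀ hept using key
  -- the finite spanning set A
  set As : Set T := ⋃ Y' ∈ F, ⋃ u ∈ (↑B : Set T), ⋃ v ∈ (↑B : Set T),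
    (↑(ept ((γ Y')⁻¹ • u) ((γ Y')⁻¹ • v)) : Set T) with hAs
  have hAsfin : As.Finite :=
    hFfin.biUnion (fun Y' _ => B.finite_toSet.biUnion (fun u _ =>
      B.finite_toSet.biUnion (fun v _ => (ept _ _).finite_toSet)))
  have hAcoe : (↑hAsfin.toFinset : Set T) = As := Set.Finite.coe_toFinset _
  refine ⟨hAsfin.toFinset, ?_, ?_⟩
  · rw [hAcoe]
    simp only [hAs, Set.iUnion_subset_iff]
    intro Y' _ u _ v _
    exact heptY₀ _ _
  intro I hI hIY₀
  obtain ⟨S, hS⟩ := hB I hI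
  simp only [mhull_eq_segUnion] at hS
  -- the finite exceptional set
  set E : Set T := ⋃ g ∈ (↑S : Set G), ⋃ Y' ∈ {Y ∈ F | g • Y ≠ Y₀}, (g • Y' ∩ Y₀) with hE
  have hEfin : E.Finite := by
    apply S.finite_toSet.biUnion
    intro g _
    apply (hFfin.sep _).biUnion
    intro Y' hY'
    exact Set.Subsingleton.finite (htrans _ (hinv g Y' (hFYs hY'.1)) _ hY₀ hY'.2)
  set S' : Finset G := Finset.image (fun q : G × Set T => q.1 * γ q.2)
    ((S ×ˢ Fs).filter (fun q => (q.1 * γ q.2) • Y₀ = Y₀)) with hS'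
  refine ⟨S', ?_, ?_⟩
  · intro h hh
    simp only [hS', Finset.mem_image, Finset.mem_filter] at hh
    obtain ⟨⟨g, Y'⟩, ⟨_, hstab⟩, rfl⟩ := hh
    exact hstab
  set W : Set T := ⋃ h ∈ S', (h : G) • mhull (↑hAsfin.toFinset : Set T) with hW
  have hWclosed : IsClosed W := by
    apply S'.finite_toSet.isClosed_biUnion
    intro h _
    apply isClosed_smul iso
    rw [mhull_eq_segUnion]
    exact isClosed_segUnion_of_finite (hAsfin.toFinset.finite_toSet)
  have hgood : I \ E ⊆ W := by
    rintro x ⟨hxI, hxE⟩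
    obtain hxc := hS hxI
    simp only [Set.mem_iUnion] at hxc
    obtain ⟨g, hgS, hxg⟩ := hxc
    rw [Set.mem_smul_set_iff_inv_smul_mem] at hxg
    obtain ⟨Y', hY'F, hwY'⟩ := hUF hxg
    by_cases hc : g • Y' = Y₀
    · have horb : ∃ g0 : G, g0 • Y₀ = Y' := ⟨g⁻¹, by rw [inv_smul_eq_iff]; exact hc.symm⟩
      have hγY' : γ Y' • Y₀ = Y' := hγ Y' horb
      have hstab : (g * γ Y') • Y₀ = Y₀ := by rw [mul_smul, hγY', hc]
      have hmem : g * γ Y' ∈ S' := by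
        simp only [hS', Finset.mem_image]
        refine ⟨(g, Y'), Finset.mem_filter.2 ⟨Finset.mem_product.2
          ⟨hgS, (hFfin.mem_toFinset).2 hY'F⟩, hstab⟩, rfl⟩
      simp only [hW, Set.mem_iUnion]
      refine ⟨g * γ Y', hmem, ?_⟩
      rw [Set.mem_smul_set_iff_inv_smul_mem, mul_inv_rev, mul_smul]
      -- (γ Y')⁻¹ • (g⁻¹ • x) ∈ mhull A
      simp only [segUnion, Set.mem_iUnion] at hxg
      obtain ⟨bu, hbu, bv, hbv, hwseg⟩ := hxg
      have hwY₀ : (γ Y')⁻¹ • (g⁻¹ • x) ∈ Y₀ := by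
        have h1 : (γ Y')⁻¹ • (g⁻¹ • x) ∈ (γ Y')⁻¹ • Y' := Set.smul_mem_smul_set hwY'
        have h2 : (γ Y')⁻¹ • Y' = Y₀ := inv_smul_eq_iff.mpr hγY'.symm
        rwa [h2] at h1
      have hwseg' : (γ Y')⁻¹ • (g⁻¹ • x) ∈ seg ((γ Y')⁻¹ • bu) ((γ Y')⁻¹ • bv) := by
        rw [← smul_seg iso]
        exact Set.smul_mem_smul_set hwseg
      have hsubA : (↑(ept ((γ Y')⁻¹ • bu) ((γ Y')⁻¹ • bv)) : Set T) ⊆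
          (↑hAsfin.toFinset : Set T) := by
        rw [hAcoe, hAs]
        intro t ht
        simp only [Set.mem_iUnion]
        exact ⟨Y', hY'F, bu, hbu, bv, hbv, ht⟩
      exact mhull_mono hsubA (hept _ _ ⟨hwY₀, hwseg'⟩)
    · exfalso
      apply hxE
      simp only [hE, Set.mem_iUnion]
      refine ⟨g, hgS, Y', ⟨hY'F, hc⟩, ?_, hIY₀ hxI⟩
      have : x = g • (g⁻¹ • x) := (smul_inv_smul g x).symm
      rw [this]
      exact Set.smul_mem_smul_set hwY'
  obtain ⟨a, b, hab, rfl⟩ := hI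
  intro x hx
  exact closure_minimal hgood hWclosed (seg_subset_closure_diff hab hEfin hx)
end

section
/- Let G act by isometries on a real tree T containing a hyperbolic element, with minimal subtree T_min ⊆ T (the union of axes of hyperbolic elements). Let 𝒴₀ be the family of closures of connected components of T ∖ closure(T_min). Then {closure(T_min)} ∪ 𝒴₀ is a transverse covering of T: these are closed subtrees covering T, distinct members meet in at most one point, and every arc of T is covered by at most three of them. -/
open Pointwise

/-- The axis of g: the set of points of minimal displacement. -/
def axisSet (G : Type*) {T : Type*} [Group G] [MetricSpace T] [MulAction G T] (g : G) :
    Set T :=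
  {x : T | ∀ y : T, dist x (g • x) ≤ dist y (g • y)}

namespace RT
variable {T : Type*} [MetricSpace T]

lemma mbtw_comm {x y z : T} (h : MBtw x y z) : MBtw z y x := by
  unfold MBtw at *; rw [dist_comm z y, dist_comm y x, dist_comm z x]; linarith

lemma mbtw_self_left (x z : T) : MBtw x x z := by simp [MBtw]

lemma mbtw_self_right (x z : T) : MBtw x z z := by simp [MBtw]

lemma mbtw_dist_left {x y z : T} (h : MBtw x y z) : dist x y ≤ dist x z := by
  have := dist_nonneg (x := y) (y := z); unfold MBtw at h; linarith

lemma mbtw_dist_right {x y z : T} (h : MBtw x y z) : dist y z ≤ dist x z := by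
  have := dist_nonneg (x := x) (y := y); unfold MBtw at h; linarith

lemma mbtw_trans {x a w y : T} (h : MBtw x a y) (h2 : MBtw a w y) :
    MBtw x w y ∧ MBtw x a w := by
  have h' : dist x a + dist a y = dist x y := h
  have h2' : dist a w + dist w y = dist a y := h2
  have t1 : dist x w ≤ dist x a + dist a w := dist_triangle x a w
  have t2 : dist x y ≤ dist x w + dist w y := dist_triangle x w y
  constructor <;> · show dist _ _ + dist _ _ = dist _ _; linarith

variable [RealTree T]

lemma exists_pt (x z : T) {r : ℝ} (h0 : 0 ≤ r) (hr : r ≤ dist x z) :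
    ∃ y, MBtw x y z ∧ dist x y = r :=
  RealTree.exists_btw x z r ⟨h0, hr⟩

lemma fourPt (x y z w : T) :
    dist x y + dist z w ≤ max (dist x z + dist y w) (dist x w + dist y z) :=
  RealTree.fourPoint x y z w

lemma btw_unique {x z y y' : T} (h : MBtw x y z) (h' : MBtw x y' z)
    (e : dist x y = dist x y') : y = y' := by
  have four := fourPt x z y y'
  have hyz : dist y z = dist x z - dist x y := by unfold MBtw at h; linarith [dist_comm y z]
  have hyz' : dist y' z = dist x z - dist x y' := by unfold MBtw at h'; linarith [dist_comm y' z]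
  have h0 : dist y y' ≤ 0 := by
    rcases le_max_iff.mp four with h4 | h4
    · rw [dist_comm z y'] at h4; linarith
    · rw [dist_comm z y] at h4; linarith
  exact dist_le_zero.mp h0

lemma seg_dist_of_le {x z y y' : T} (h : MBtw x y z) (h' : MBtw x y' z)
    (hle : dist x y ≤ dist x y') : dist y y' = dist x y' - dist x y := by
  have hd : dist x y' ≤ dist x z := mbtw_dist_left h'
  have hyz : dist y z = dist x z - dist x y := by
    unfold MBtw at h; linarith
  obtain ⟨w, hw, hwd⟩ := exists_pt y z (r := dist x y' - dist x y) (by linarith) (by linarith)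
  have hxw : MBtw x w z ∧ MBtw x y w := mbtw_trans h hw
  have hdxw : dist x w = dist x y' := by
    have h1 : dist x w ≤ dist x y + dist y w := dist_triangle x y w
    have hwz : dist w z = dist x z - dist x y' := by
      have hw' : dist y w + dist w z = dist y z := hw
      rw [hyz] at hw'; linarith
    have h2 : dist x z ≤ dist x w + dist w z := dist_triangle x w z
    exact le_antisymm (by linarith) (by linarith)
  have hyw : y' = w := btw_unique h' hxw.1 hdxw.symm
  rw [hyw, hdxw]; exact hwd

lemma seg_dist {x z y y' : T} (h : MBtw x y z) (h' : MBtw x y' z) :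
    dist y y' = |dist x y - dist x y'| := by
  rcases le_total (dist x y) (dist x y') with hle | hle
  · rw [seg_dist_of_le h h' hle, abs_of_nonpos (by linarith)]; ring
  · rw [dist_comm y y', seg_dist_of_le h' h hle, abs_of_nonneg (by linarith)]

/-- ordering on a segment -/
lemma seg_order {x z y y' : T} (h : MBtw x y z) (h' : MBtw x y' z)
    (hle : dist x y ≤ dist x y') : MBtw x y y' ∧ MBtw y y' z := by
  have hd := seg_dist_of_le h h' hle
  constructor
  · unfold MBtw; rw [hd]; ring
  · unfold MBtw at h' ⊢; rw [hd]; unfold MBtw at h; linarith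

lemma lemB {z p u q : T} (h : MBtw p u q) :
    dist z u ≤ max (dist z p - dist p u) (dist z q - dist u q) := by
  have four := fourPt z u p q
  unfold MBtw at h
  rcases le_max_iff.mp four with h4 | h4
  · apply le_max_iff.mpr; left; linarith [dist_comm u q]
  · apply le_max_iff.mpr; right; linarith [dist_comm u p, dist_comm u q]

end RT

noncomputable def gp {T : Type*} [MetricSpace T] (w x y : T) : ℝ :=
  (dist w x + dist w y - dist x y) / 2

namespace RT2
open RT
variable {T : Type*} [MetricSpace T]

lemma gp_nonneg (w x y : T) : 0 ≤ gp w x y := by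
  have := dist_triangle x w y
  unfold gp; linarith [dist_comm w x]

lemma gp_le_left (w x y : T) : gp w x y ≤ dist w x := by
  have := dist_triangle w x y
  unfold gp; linarith

lemma gp_comm (w x y : T) : gp w x y = gp w y x := by
  unfold gp; rw [dist_comm x y]; ring

lemma mbtw_iff_gp {x w y : T} : MBtw x w y ↔ gp w x y = 0 := by
  unfold MBtw gp
  constructor <;> intro h <;> [skip; skip] <;> linarith [dist_comm w x]

lemma gp_self (w x : T) : gp w x x = dist w x := by
  unfold gp; simp

variable [RealTree T]

lemma gp_min (w x y z : T) : min (gp w x y) (gp w y z) ≤ gp w x z := by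
  have four := fourPt x z w y
  rcases le_max_iff.mp four with h4 | h4
  · apply min_le_iff.mpr; right
    unfold gp
    linarith [dist_comm z y, dist_comm x w, dist_comm w y]
  · apply min_le_iff.mpr; left
    unfold gp
    linarith [dist_comm z w, dist_comm w y]

/-- propagation: if w is between u and c ("product 0") and not between v and c
("product > 0"), then w is between u and v. -/
lemma gp_propagate {w u v c : T} (h0 : gp w u c = 0) (hpos : 0 < gp w v c) :
    MBtw u w v := by
  have := gp_min w u v c
  have h1 : gp w u v ≤ 0 := by
    rcases min_le_iff.mp this with h | h
    · linarith
    · linarith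
  have h2 := gp_nonneg w u v
  exact mbtw_iff_gp.mpr (le_antisymm h1 h2)

lemma agree {a u v w₁ w₂ : T} (h1 : MBtw a w₁ u) (h2 : MBtw a w₂ v)
    (e : dist a w₁ = dist a w₂) (hle : dist a w₁ ≤ gp a u v) : w₁ = w₂ := by
  set δ := dist a w₁ with hδ
  have hw2v : dist w₂ v = dist a v - δ := by
    have := h2; unfold MBtw at this; rw [← e] at this; linarith
  have step1 : dist u w₂ ≤ dist u a - δ := by
    have hB := lemB (z := u) h2
    rcases le_max_iff.mp hB with h | h
    · rw [← e] at h; exact h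
    · rw [hw2v] at h
      unfold gp at hle
      linarith [dist_comm u a, dist_comm a u, dist_comm u v, dist_comm a v]
  have four := fourPt w₁ w₂ a u
  have hw1u : dist w₁ u = dist a u - δ := by
    have := h1; unfold MBtw at this; linarith
  have hd0 : dist w₁ w₂ ≤ 0 := by
    rcases le_max_iff.mp four with h | h
    · rw [dist_comm w₁ a] at h; rw [dist_comm u w₂] at step1; linarith [dist_comm u a]
    · rw [hw1u, dist_comm w₂ a, ← e] at h; linarith
  exact dist_le_zero.mp hd0

end RT2

namespace RT3
open RT RT2
variable {T : Type*} [MetricSpace T]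

lemma seg_isClosed (x z : T) : IsClosed (seg x z) := by
  have : seg x z = {y | dist x y + dist y z = dist x z} := rfl
  rw [this]
  exact isClosed_eq (by fun_prop) continuous_const

variable [RealTree T]

noncomputable def par (x z : T) (t : ℝ) : T :=
  if h : t ∈ Set.Icc (0:ℝ) (dist x z) then Classical.choose (exists_pt x z h.1 h.2) else x

lemma par_spec {x z : T} {t : ℝ} (h : t ∈ Set.Icc (0:ℝ) (dist x z)) :
    MBtw x (par x z t) z ∧ dist x (par x z t) = t := by
  unfold par; rw [dif_pos h]
  exact Classical.choose_spec (exists_pt x z h.1 h.2)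

lemma par_eq {x z y : T} (hy : MBtw x y z) : par x z (dist x y) = y := by
  have hm : dist x y ∈ Set.Icc (0:ℝ) (dist x z) := ⟨dist_nonneg, mbtw_dist_left hy⟩
  obtain ⟨hb, hd⟩ := par_spec hm
  exact btw_unique hb hy hd

lemma seg_eq_image (x z : T) : seg x z = par x z '' Set.Icc 0 (dist x z) := by
  ext y
  constructor
  · intro hy
    exact ⟨dist x y, ⟨dist_nonneg, mbtw_dist_left hy⟩, par_eq hy⟩
  · rintro ⟨t, ht, rfl⟩
    exact (par_spec ht).1

lemma par_lip (x z : T) : LipschitzOnWith 1 (par x z) (Set.Icc 0 (dist x z)) := by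
  apply LipschitzOnWith.of_dist_le_mul
  intro s hs t ht
  obtain ⟨hbs, hds⟩ := par_spec hs
  obtain ⟨hbt, hdt⟩ := par_spec ht
  have := seg_dist hbs hbt
  rw [hds, hdt] at this
  rw [this, Real.dist_eq]
  simp

lemma seg_preconnected (x z : T) : IsPreconnected (seg x z) := by
  rw [seg_eq_image]
  exact isPreconnected_Icc.image _ (par_lip x z).continuousOn

lemma mconvex_isPreconnected {S : Set T} (hS : MConvex S) : IsPreconnected S := by
  rcases Set.eq_empty_or_nonempty S with rfl | ⟨x₀, hx₀⟩
  · exact isPreconnected_empty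
  · have hU : S = ⋃₀ {Y | ∃ z ∈ S, Y = seg x₀ z} := by
      apply Set.Subset.antisymm
      · intro z hz; exact ⟨seg x₀ z, ⟨z, hz, rfl⟩, mbtw_self_right x₀ z⟩
      · intro w hw
        obtain ⟨Y, ⟨z, hz, rfl⟩, hwY⟩ := hw
        exact hS x₀ hx₀ z hz hwY
    rw [hU]
    apply isPreconnected_sUnion x₀
    · rintro s ⟨z, hz, rfl⟩; exact mbtw_self_left x₀ z
    · rintro s ⟨z, hz, rfl⟩; exact seg_preconnected x₀ z

lemma isPreconnected_mconvex {S : Set T} (hS : IsPreconnected S) : MConvex S := by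
  intro x hx z hz y hy
  by_contra hyS
  have hxy : x ≠ y := fun h => hyS (h ▸ hx)
  have hzy : z ≠ y := fun h => hyS (h ▸ hz)
  set U : Set T := {w | 0 < gp y w x} with hUdef
  set V : Set T := {w | 0 < dist y w ∧ gp y w x ≤ 0} with hVdef
  have hUopen : IsOpen U := by
    have : Continuous fun w => gp y w x := by unfold gp; fun_prop
    exact isOpen_lt continuous_const this
  have hVopen : IsOpen V := by
    rw [Metric.isOpen_iff]
    rintro w ⟨hw1, hw2⟩
    refine ⟨dist y w, hw1, fun w' hw' => ?_⟩
    rw [Metric.mem_ball] at hw'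
    have hcm : dist w' w = dist w w' := dist_comm w' w
    have hyw' : 0 < dist y w' := by
      linarith [dist_triangle y w' w]
    refine ⟨hyw', ?_⟩
    have hpos : 0 < gp y w' w := by
      unfold gp; linarith [dist_nonneg (x := y) (y := w')]
    have hmin := gp_min y x w' w
    have h0 : gp y x w = 0 := by
      rw [gp_comm] at hw2
      exact le_antisymm hw2 (gp_nonneg _ _ _)
    rw [h0] at hmin
    rcases min_le_iff.mp hmin with h | h
    · rw [gp_comm]; exact h
    · linarith
  have hcov : S ⊆ U ∪ V := by
    intro w hw
    rcases eq_or_ne w y with rfl | hwy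
    · exact absurd hw hyS
    rcases lt_or_ge 0 (gp y w x) with h | h
    · exact Or.inl h
    · exact Or.inr ⟨dist_pos.mpr (fun h' => hwy h'.symm) , h⟩
  have hxU : x ∈ S ∩ U := ⟨hx, by
    show 0 < gp y x x
    rw [gp_self]; exact dist_pos.mpr (fun h' => hxy h'.symm)⟩
  have hzV : z ∈ S ∩ V := ⟨hz, by
    constructor
    · exact dist_pos.mpr (fun h' => hzy h'.symm)
    · have h1 : gp y x z = 0 := mbtw_iff_gp.mp hy
      rw [gp_comm y z x]
      exact le_of_eq h1⟩
  obtain ⟨w, _, hwU, hwV⟩ := hS U V hUopen hVopen hcov ⟨x, hxU⟩ ⟨z, hzV⟩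
  exact absurd hwU (not_lt.mpr hwV.2)

end RT3

namespace RT4
open RT RT2 RT3

def axisSet' (G : Type*) {T : Type*} [Group G] [MetricSpace T] [MulAction G T] (g : G) :
    Set T := {x : T | ∀ y : T, dist x (g • x) ≤ dist y (g • y)}

variable {G : Type*} [Group G] {T : Type*} [MetricSpace T] [MulAction G T]

lemma dsmul (iso : ∀ g : G, Isometry fun x : T => g • x) (g : G) (x y : T) :
    dist (g • x) (g • y) = dist x y := (iso g).dist_eq x y

lemma mbtw_smul (iso : ∀ g : G, Isometry fun x : T => g • x) (g : G) {x y z : T}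
    (h : MBtw x y z) : MBtw (g • x) (g • y) (g • z) := by
  show dist _ _ + dist _ _ = dist _ _
  rw [dsmul iso, dsmul iso, dsmul iso]; exact h

lemma axis_closed (iso : ∀ g : G, Isometry fun x : T => g • x) (g : G) :
    IsClosed (axisSet' (T := T) G g) := by
  have : axisSet' (T := T) G g = ⋂ y : T, {x : T | dist x (g • x) ≤ dist y (g • y)} := by
    ext x; simp [axisSet', Set.mem_iInter]
  rw [this]
  apply isClosed_iInter
  intro y
  exact isClosed_le (continuous_id.dist (iso g).continuous) continuous_const

lemma axis_smul_mem {g : G} {a : T}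
    (iso : ∀ g : G, Isometry fun x : T => g • x) (ha : a ∈ axisSet' G g) :
    g • a ∈ axisSet' G g ∧ g⁻¹ • a ∈ axisSet' G g := by
  constructor
  · intro y
    have : dist (g • a) (g • (g • a)) = dist a (g • a) := dsmul iso g a (g • a)
    rw [this]; exact ha y
  · intro y
    have e : dist (g⁻¹ • a) (g • (g⁻¹ • a)) = dist a (g • a) := by
      rw [smul_inv_smul]
      rw [show dist (g⁻¹ • a) a = dist (g • (g⁻¹ • a)) (g • a) from (dsmul iso g _ _).symm]
      rw [smul_inv_smul, dist_comm]
    rw [e]; exact ha y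

variable [RealTree T]

lemma axis_mconvex (iso : ∀ g : G, Isometry fun x : T => g • x) (g : G) :
    MConvex (axisSet' (T := T) G g) := by
  intro v hv w hw u hu
  intro y
  have huvw : dist v u + dist u w = dist v w := hu
  have h1 := lemB (z := u) (mbtw_smul iso g hu)
  rw [dsmul iso g v u, dsmul iso g u w] at h1
  have h2 : dist u (g • v) - dist v u ≤ max (dist v (g • v)) (dist w (g • w)) := by
    have hB2 := lemB (z := g • v) hu
    have e1 : dist (g • v) w ≤ dist v w + dist w (g • w) := by
      have := dist_triangle (g • v) (g • w) w
      rw [dsmul iso g v w] at this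
      linarith [dist_comm (g • w) w]
    rcases le_max_iff.mp hB2 with h | h
    · apply le_max_iff.mpr; left
      linarith [dist_comm (g • v) v, dist_comm u (g • v), dist_nonneg (x := v) (y := u)]
    · apply le_max_iff.mpr; right
      linarith [dist_comm u (g • v)]
  have h3 : dist u (g • w) - dist u w ≤ max (dist v (g • v)) (dist w (g • w)) := by
    have hB3 := lemB (z := g • w) (mbtw_comm hu)
    have e1 : dist (g • w) v ≤ dist v w + dist v (g • v) := by
      have := dist_triangle (g • w) (g • v) v
      rw [dsmul iso g w v] at this
      linarith [dist_comm (g • v) v, dist_comm w v]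
    rcases le_max_iff.mp hB3 with h | h
    · apply le_max_iff.mpr; right
      linarith [dist_comm (g • w) u, dist_comm (g • w) w, dist_comm w u,
        dist_nonneg (x := w) (y := u)]
    · apply le_max_iff.mpr; left
      linarith [dist_comm (g • w) u, dist_comm u v]
  have hfin : dist u (g • u) ≤ max (dist v (g • v)) (dist w (g • w)) := by
    rcases le_max_iff.mp h1 with h | h
    · linarith
    · linarith
  rcases le_max_iff.mp hfin with h | h
  · exact le_trans h (hv y)
  · exact le_trans h (hw y)

lemma key_ineq (iso : ∀ g : G, Isometry fun x : T => g • x) (g : G) (z w : T) :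
    dist z (g • g • z) ≤ dist z (g • z) + dist w (g • w) := by
  have four := fourPt z (g • g • z) (g • z) (g • w)
  have e1 : dist (g • z) (g • w) = dist z w := dsmul iso g z w
  have e2 : dist (g • g • z) (g • w) = dist (g • z) w := dsmul iso g (g • z) w
  have e3 : dist (g • g • z) (g • z) = dist (g • z) z := by
    rw [show dist (g • g • z) (g • z) = dist (g • z) z from dsmul iso g (g • z) z]
  have t1 : dist (g • z) w ≤ dist z w + dist w (g • w) := by
    have := dist_triangle (g • z) (g • w) w
    rw [e1] at this
    linarith [dist_comm (g • w) w, dist_comm z w]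
  have t2 : dist z (g • w) ≤ dist z w + dist w (g • w) := dist_triangle z w (g • w)
  rcases le_max_iff.mp four with h | h
  · linarith
  · linarith [dist_comm (g • z) z]

lemma axis_criterion (iso : ∀ g : G, Isometry fun x : T => g • x) {g : G} {p : T}
    (h : 2 * dist p (g • p) ≤ dist p (g • g • p)) : p ∈ axisSet' G g := by
  intro y
  have := key_ineq iso g p y
  linarith

lemma hyp_criterion (iso : ∀ g : G, Isometry fun x : T => g • x) {g : G} {p : T}
    (hpos : 0 < dist p (g • p)) (h : 2 * dist p (g • p) ≤ dist p (g • g • p)) :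
    ∀ x : T, g • x ≠ x := by
  intro x hx
  have := key_ineq iso g p x
  rw [hx] at this
  simp at this
  linarith

end RT4

namespace RT5
open RT RT2 RT3 RT4

variable {T : Type*} [MetricSpace T] [RealTree T]

lemma last_point {A : Set T} (hcl : IsClosed A) {x z : T} (hx : x ∈ A) :
    ∃ a, a ∈ A ∧ MBtw x a z ∧ ∀ w ∈ A, MBtw x w z → dist x w ≤ dist x a := by
  set S : Set ℝ := (dist x) '' (A ∩ seg x z) with hS
  have hxS : (0:ℝ) ∈ S := ⟨x, ⟨hx, mbtw_self_left x z⟩, dist_self x⟩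
  have hSne : S.Nonempty := ⟨0, hxS⟩
  have hSbdd : BddAbove S := by
    refine ⟨dist x z, fun r hr => ?_⟩
    obtain ⟨w, ⟨_, hw2⟩, rfl⟩ := hr
    exact mbtw_dist_left hw2
  set sa := sSup S with hsa
  have hsa0 : 0 ≤ sa := le_csSup hSbdd hxS
  have hsaM : sa ≤ dist x z := csSup_le hSne (by
    rintro r ⟨w, ⟨_, hw2⟩, rfl⟩; exact mbtw_dist_left hw2)
  obtain ⟨a, ha, had⟩ := exists_pt x z hsa0 hsaM
  have haA : a ∈ A ∩ seg x z := by
    have hclos : IsClosed (A ∩ seg x z) := hcl.inter (seg_isClosed x z)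
    rw [← hclos.closure_eq]
    rw [Metric.mem_closure_iff]
    intro ε hε
    obtain ⟨r, hr, hlt⟩ := exists_lt_of_lt_csSup hSne (show sa - ε < sa by linarith)
    obtain ⟨w, hw, rfl⟩ := hr
    refine ⟨w, hw, ?_⟩
    have hle : dist x w ≤ sa := le_csSup hSbdd ⟨w, hw, rfl⟩
    have := seg_dist ha hw.2
    rw [had] at this
    rw [this, abs_of_nonneg (by linarith)]
    linarith
  refine ⟨a, haA.1, ha, fun w hwA hwseg => ?_⟩
  rw [had]
  exact le_csSup hSbdd ⟨w, ⟨hwA, hwseg⟩, rfl⟩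

lemma no_overlap {A : Set T} (hconv : MConvex A) {x z a u : T} (ha : a ∈ A) (hu : u ∈ A)
    (haz : MBtw x a z) (hmax : ∀ w ∈ A, MBtw x w z → dist x w ≤ dist x a)
    (hgp : 0 < gp a u z) : False := by
  have h1 : gp a u z ≤ dist a u := gp_le_left a u z
  have h2 : gp a u z ≤ dist a z := by
    rw [gp_comm]; exact gp_le_left a z u
  obtain ⟨w₁, hw₁, hw₁d⟩ := exists_pt a z (le_of_lt hgp) h2
  obtain ⟨w₂, hw₂, hw₂d⟩ := exists_pt a u (le_of_lt hgp) h1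
  have heq : w₂ = w₁ := agree hw₂ hw₁ (by rw [hw₂d, hw₁d]) (by rw [hw₂d])
  have hw₁A : w₁ ∈ A := heq ▸ hconv a ha u hu hw₂
  obtain ⟨hxw₁z, hxaw₁⟩ := mbtw_trans haz hw₁
  have : dist x w₁ ≤ dist x a := hmax w₁ hw₁A hxw₁z
  have : dist x a + dist a w₁ = dist x w₁ := hxaw₁
  linarith

variable {G : Type*} [Group G] [MulAction G T]

lemma dinv1 (iso : ∀ g : G, Isometry fun x : T => g • x) (k : G) (u v : T) :
    dist (k⁻¹ • u) v = dist u (k • v) := by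
  have := dsmul iso k (k⁻¹ • u) v
  rw [smul_inv_smul] at this
  exact this.symm

lemma dinv2 (iso : ∀ g : G, Isometry fun x : T => g • x) (k : G) (u v : T) :
    dist u (k⁻¹ • v) = dist (k • u) v := by
  have := dsmul iso k u (k⁻¹ • v)
  rw [smul_inv_smul] at this
  exact this.symm

lemma tmin_mconvex (iso : ∀ g : G, Isometry fun x : T => g • x) :
    MConvex (⋃ g ∈ {g : G | ∀ x : T, g • x ≠ x}, axisSet' (T := T) G g) := by
  intro x hx z hz p hp
  simp only [Set.mem_iUnion, Set.mem_setOf_eq, exists_prop] at hx hz ⊢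
  obtain ⟨g, hgH, hxg⟩ := hx
  obtain ⟨h, hhH, hzh⟩ := hz
  -- last point of the g-axis along [x,z], seen from x
  obtain ⟨a, haA, haz, hamax⟩ := last_point (axis_closed iso g) (z := z) hxg
  -- last point of the h-axis along [z,x], seen from z
  obtain ⟨b, hbA, hbx, hbmax⟩ := last_point (axis_closed iso h) (z := x) hzh
  by_cases hc1 : dist x p ≤ dist x a
  · exact ⟨g, hgH, (axis_mconvex iso g) x hxg a haA (seg_order hp haz hc1).1⟩
  by_cases hc2 : dist z p ≤ dist z b
  · exact ⟨h, hhH, (axis_mconvex iso h) z hzh b hbA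
      (seg_order (mbtw_comm hp) hbx hc2).1⟩
  push_neg at hc1 hc2
  -- notation
  have hbz : MBtw x b z := mbtw_comm hbx
  have hpz : dist x p + dist p z = dist x z := hp
  have haz' : dist x a + dist a z = dist x z := haz
  have hbz' : dist x b + dist b z = dist x z := hbz
  have hdzb : dist b z = dist z b := dist_comm b z
  have hxb : dist x b = dist x z - dist z b := by linarith
  have hxpb : dist x p ≤ dist x b := by
    have := dist_comm p z; linarith
  have horder1 := seg_order haz hp (le_of_lt hc1)
  have horder2 := seg_order hp hbz hxpb
  have horder3 := seg_order haz hbz (by linarith)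
  have dap : dist a p = dist x p - dist x a := by
    have : dist x a + dist a p = dist x p := horder1.1; linarith
  have dpb : dist p b = dist x b - dist x p := by
    have : dist x p + dist p b = dist x b := horder2.1; linarith
  have dab : dist a b = dist x b - dist x a := by
    have : dist x a + dist a b = dist x b := horder3.1; linarith
  have htpos : 0 < dist a p := by rw [dap]; linarith
  have htlt : dist a p < dist a b := by rw [dap, dab]; linarith [dist_comm p z]
  -- the four zero Gromov products
  have prod_a : ∀ u, u ∈ axisSet' (T := T) G g → gp a u z = 0 := by
    intro u hu
    by_contra hne
    exact no_overlap (axis_mconvex iso g) haA hu haz hamax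
      (lt_of_le_of_ne (gp_nonneg _ _ _) (Ne.symm hne))
  have prod_b : ∀ u, u ∈ axisSet' (T := T) G h → gp b u x = 0 := by
    intro u hu
    by_contra hne
    exact no_overlap (axis_mconvex iso h) hbA hu hbx hbmax
      (lt_of_le_of_ne (gp_nonneg _ _ _) (Ne.symm hne))
  have pgA := axis_smul_mem iso hxg  -- not at a; we need at a
  have pa_g : gp a (g • a) z = 0 := prod_a _ (axis_smul_mem iso haA).1
  have pa_gi : gp a (g⁻¹ • a) z = 0 := prod_a _ (axis_smul_mem iso haA).2
  have pb_h : gp b (h • b) x = 0 := prod_b _ (axis_smul_mem iso hbA).1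
  have pb_hi : gp b (h⁻¹ • b) x = 0 := prod_b _ (axis_smul_mem iso hbA).2
  -- transfer the products to point towards b (resp. a)
  have gpabz : gp a b z = dist a b := by
    unfold gp
    have : dist a b + dist b z = dist a z := horder3.2
    linarith
  have gpbax : gp b a x = dist a b := by
    unfold gp
    have h1 : dist x a + dist a b = dist x b := horder3.1
    have h2 : dist x b + dist b z = dist x z := hbz
    have h3 : dist x a + dist a z = dist x z := haz
    linarith [dist_comm b a, dist_comm b x, dist_comm a x]
  have hΔpos : 0 < dist a b := lt_trans htpos htlt
  have pa_b : ∀ u, gp a u z = 0 → gp a u b = 0 := by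
    intro u hu
    have hmin := gp_min a u b z
    rw [gpabz, hu] at hmin
    rcases min_le_iff.mp hmin with h' | h'
    · exact le_antisymm h' (gp_nonneg _ _ _)
    · linarith
  have pb_a : ∀ u, gp b u x = 0 → gp b u a = 0 := by
    intro u hu
    have hmin := gp_min b u a x
    rw [gpbax, hu] at hmin
    rcases min_le_iff.mp hmin with h' | h'
    · exact le_antisymm h' (gp_nonneg _ _ _)
    · linarith
  have pa_gb : gp a (g • a) b = 0 := pa_b _ pa_g
  have pa_gib : gp a (g⁻¹ • a) b = 0 := pa_b _ pa_gi
  have pb_ha : gp b (h • b) a = 0 := pb_a _ pb_h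
  have pb_hia : gp b (h⁻¹ • b) a = 0 := pb_a _ pb_hi
  -- displacement lengths
  have hL : 0 < dist a (g • a) := dist_pos.mpr (Ne.symm (hgH a))
  have hl : 0 < dist b (h • b) := dist_pos.mpr (Ne.symm (hhH b))
  have dga_a : dist (g⁻¹ • a) a = dist a (g • a) := dinv1 iso g a a
  have dhb_b : dist (h⁻¹ • b) b = dist b (h • b) := dinv1 iso h b b
  -- the chain of alignments
  have hpos1 : 0 < gp a p b := by
    unfold gp; linarith [dap, dpb, dab, htpos, dist_comm p z]
  have P1 : MBtw (g⁻¹ • a) a p := gp_propagate pa_gib hpos1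
  have E1 : dist (g⁻¹ • a) p = dist a (g • a) + dist a p := by
    have e : dist (g⁻¹ • a) a + dist a p = dist (g⁻¹ • a) p := P1
    rw [dga_a] at e; exact e.symm
  have E2 : dist a (g • p) = dist a (g • a) + dist a p := by
    rw [← dinv1 iso g a p]; exact E1
  have hpos2 : 0 < gp a (g • p) (g • a) := by
    have e : dist (g • p) (g • a) = dist p a := dsmul iso g p a
    unfold gp; rw [e, E2]; linarith [dist_comm p a, hL]
  have h0_2 : gp a b (g • a) = 0 := (gp_comm a b (g • a)).trans pa_gb
  have P2 : MBtw b a (g • p) := gp_propagate h0_2 hpos2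
  have E3 : dist b (g • p) = dist a b + dist a (g • p) := by
    have e : dist b a + dist a (g • p) = dist b (g • p) := P2
    linarith [dist_comm b a]
  have hpos3 : 0 < gp b (g • p) a := by
    unfold gp; rw [E3]
    linarith [dist_comm b a, dist_comm a (g • p), hΔpos]
  have P3 : MBtw (h⁻¹ • b) b (g • p) := gp_propagate pb_hia hpos3
  have E4 : dist (h⁻¹ • b) (g • p) = dist b (h • b) + dist b (g • p) := by
    have e : dist (h⁻¹ • b) b + dist b (g • p) = dist (h⁻¹ • b) (g • p) := P3
    rw [dhb_b] at e; exact e.symm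
  have E5 : dist b (h • g • p) = dist b (h • b) + dist b (g • p) := by
    rw [← dinv1 iso h b (g • p)]; exact E4
  have hpos4 : 0 < gp b (h • g • p) (h • b) := by
    have e : dist (h • g • p) (h • b) = dist (g • p) b := dsmul iso h (g • p) b
    unfold gp; rw [e, E5]; linarith [dist_comm b (g • p), hl]
  have h0_4 : gp b a (h • b) = 0 := (gp_comm b a (h • b)).trans pb_ha
  have P4 : MBtw a b (h • g • p) := gp_propagate h0_4 hpos4
  have E6 : dist a (h • g • p) = dist a b + dist b (h • g • p) := by
    have e : dist a b + dist b (h • g • p) = dist a (h • g • p) := P4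
    exact e.symm
  have hpos5 : 0 < gp b p a := by
    unfold gp
    linarith [dist_comm b p, dist_comm b a, dist_comm p a, dpb, dab, dap, htlt]
  have h0_5 : gp b (h • g • p) a = 0 := by
    have e : gp b a (h • g • p) = 0 := mbtw_iff_gp.mp P4
    exact (gp_comm b (h • g • p) a).trans e
  have P5 : MBtw (h • g • p) b p := gp_propagate h0_5 hpos5
  have E7 : dist (h • g • p) p = dist b (h • g • p) + dist b p := by
    have e : dist (h • g • p) b + dist b p = dist (h • g • p) p := P5
    linarith [dist_comm b (h • g • p)]
  -- mirror chain
  have P1' : MBtw (h • b) b p := gp_propagate pb_ha hpos5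
  have E8 : dist (h • b) p = dist b (h • b) + dist b p := by
    have e : dist (h • b) b + dist b p = dist (h • b) p := P1'
    linarith [dist_comm b (h • b)]
  have E8' : dist b (h⁻¹ • p) = dist b (h • b) + dist b p := by
    rw [dinv2 iso h b p]; exact E8
  have hpos6 : 0 < gp b (h⁻¹ • p) (h⁻¹ • b) := by
    have e1 : dist b (h⁻¹ • b) = dist (h • b) b := dinv2 iso h b b
    have e2 : dist (h⁻¹ • p) (h⁻¹ • b) = dist p b := dsmul iso (h⁻¹) p b
    unfold gp; rw [e1, e2, E8']
    linarith [dist_comm b (h • b), dist_comm b p, hl, dist_comm p b]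
  have h0_6 : gp b a (h⁻¹ • b) = 0 := (gp_comm b a (h⁻¹ • b)).trans pb_hia
  have P2' : MBtw a b (h⁻¹ • p) := gp_propagate h0_6 hpos6
  have E9 : dist a (h⁻¹ • p) = dist a b + dist b (h⁻¹ • p) := by
    have e : dist a b + dist b (h⁻¹ • p) = dist a (h⁻¹ • p) := P2'
    exact e.symm
  have hpos7 : 0 < gp a (h⁻¹ • p) b := by
    unfold gp; rw [E9]
    linarith [dist_comm b (h⁻¹ • p), hΔpos]
  have P3' : MBtw (g • a) a (h⁻¹ • p) := gp_propagate pa_gb hpos7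
  have E10 : dist (g • a) (h⁻¹ • p) = dist a (g • a) + dist a (h⁻¹ • p) := by
    have e : dist (g • a) a + dist a (h⁻¹ • p) = dist (g • a) (h⁻¹ • p) := P3'
    linarith [dist_comm a (g • a)]
  have E11 : dist a (g⁻¹ • h⁻¹ • p) = dist (g • a) (h⁻¹ • p) := dinv2 iso g a (h⁻¹ • p)
  have E12 : dist p (g⁻¹ • h⁻¹ • p) = dist (h • g • p) p := by
    have e2 := dsmul iso g p (g⁻¹ • h⁻¹ • p)
    rw [smul_inv_smul] at e2
    have e3 := dsmul iso h (g • p) (h⁻¹ • p)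
    rw [smul_inv_smul] at e3
    rw [← e2]; exact e3.symm
  have hpos8 : 0 < gp p (g⁻¹ • h⁻¹ • p) a := by
    unfold gp
    rw [E12, E7]
    linarith [dist_comm (g⁻¹ • h⁻¹ • p) a, E11, E10, E9, E8', E6, E5, E3, E2,
      dist_comm p a, dap, dpb, dab, htpos, dist_comm b p]
  have h0_8 : gp p (h • g • p) a = 0 := by
    unfold gp
    linarith [E7, E6, dist_comm p (h • g • p), dist_comm (h • g • p) a,
      dist_comm p a, dist_comm b p, dap, dpb, dab]
  have P6 : MBtw (h • g • p) p (g⁻¹ • h⁻¹ • p) := gp_propagate h0_8 hpos8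
  have E13 : dist (h • g • p) (g⁻¹ • h⁻¹ • p)
      = dist (h • g • p) p + dist p (g⁻¹ • h⁻¹ • p) := by
    have e : dist (h • g • p) p + dist p (g⁻¹ • h⁻¹ • p)
        = dist (h • g • p) (g⁻¹ • h⁻¹ • p) := P6
    exact e.symm
  -- conclude via the axis criterion for k = h * g
  have ek : (h * g) • p = h • g • p := mul_smul h g p
  have ekk : dist p ((h * g) • (h * g) • p) = dist (g⁻¹ • h⁻¹ • p) (h • g • p) := by
    have e := dsmul iso (h * g)⁻¹ p ((h * g) • (h * g) • p)
    rw [inv_smul_smul] at e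
    rw [← e, mul_inv_rev, mul_smul, ek]
  have dkp : dist p ((h * g) • p) = dist (h • g • p) p := by rw [ek, dist_comm]
  have hcrit : 2 * dist p ((h * g) • p) ≤ dist p ((h * g) • (h * g) • p) := by
    rw [dkp, ekk, dist_comm (g⁻¹ • h⁻¹ • p) (h • g • p), E13, E12]
    linarith
  have hppos : 0 < dist p ((h * g) • p) := by
    rw [dkp, E7]
    linarith [E5, E3, E2, hL, hl, hΔpos, htpos, dist_nonneg (x := b) (y := p)]
  exact ⟨h * g, hyp_criterion iso hppos hcrit, axis_criterion iso hcrit⟩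

end RT5

namespace RT6
open RT RT2 RT3

variable {T : Type*} [MetricSpace T] [RealTree T]

lemma median (c w w' : T) :
    ∃ m, MBtw c m w ∧ MBtw w m w' ∧ dist c m = gp c w w' := by
  have h1 : gp c w w' ≤ dist c w := gp_le_left c w w'
  have h2 : gp c w w' ≤ dist c w' := by rw [gp_comm]; exact gp_le_left c w' w
  have h0 : 0 ≤ gp c w w' := gp_nonneg c w w'
  obtain ⟨m, hm, hmd⟩ := exists_pt c w h0 h1
  obtain ⟨m', hm', hmd'⟩ := exists_pt c w' h0 h2
  have : m = m' := agree hm hm' (by rw [hmd, hmd']) (by rw [hmd])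
  subst this
  refine ⟨m, hm, ?_, hmd⟩
  show dist w m + dist m w' = dist w w'
  have e1 : dist c m + dist m w = dist c w := hm
  have e2 : dist c m + dist m w' = dist c w' := hm'
  have : gp c w w' = (dist c w + dist c w' - dist w w') / 2 := rfl
  rw [hmd] at e1 e2
  linarith [dist_comm w m]

/-- existence of the gate (nearest-point projection) onto a nonempty closed convex set -/
lemma gate_exists {K : Set T} (hcl : IsClosed K) (hcv : MConvex K) (hne : K.Nonempty)
    (c : T) : ∃ p ∈ K, (∀ w ∈ K, MBtw c p w) ∧ dist c p = Metric.infDist c K := by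
  set d := Metric.infDist c K with hd
  have hnn : 0 ≤ d := Metric.infDist_nonneg
  have key : ∀ w₀ ∈ K, ∀ p, MBtw c p w₀ → dist c p = d → p ∈ K := by
    intro w₀ hw₀ p hp hpd
    rw [← hcl.closure_eq, Metric.mem_closure_iff]
    intro ε hε
    obtain ⟨w', hw', hdw'⟩ := (Metric.infDist_lt_iff hne).mp
      (show Metric.infDist c K < d + ε by rw [← hd]; linarith)
    obtain ⟨m, hm1, hm2, hm4⟩ := median c w₀ w'
    have hmK : m ∈ K := hcv w₀ hw₀ w' hw' hm2
    have h1 : d ≤ dist c m := Metric.infDist_le_dist_of_mem hmK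
    have h2 : dist c m ≤ dist c w' := by
      rw [hm4, gp_comm]; exact gp_le_left c w' w₀
    have h3 := seg_dist hp hm1
    refine ⟨m, hmK, ?_⟩
    rw [h3, hpd, abs_of_nonpos (by linarith)]
    linarith
  obtain ⟨w₀, hw₀⟩ := hne
  have hle : d ≤ dist c w₀ := Metric.infDist_le_dist_of_mem hw₀
  obtain ⟨p, hp, hpd⟩ := exists_pt c w₀ hnn hle
  have hpK := key w₀ hw₀ p hp hpd
  refine ⟨p, hpK, fun w hw => ?_, hpd⟩
  obtain ⟨q, hq, hqd⟩ := exists_pt c w hnn (Metric.infDist_le_dist_of_mem hw)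
  have hqK := key w hw q hq hqd
  obtain ⟨m, hm1, hm2, hm4⟩ := median c p q
  have hmK : m ∈ K := hcv p hpK q hqK hm2
  have h1 : d ≤ dist c m := Metric.infDist_le_dist_of_mem hmK
  have hpq : dist p q ≤ 0 := by
    unfold gp at hm4; rw [hpd, hqd] at hm4; linarith
  rw [show p = q from dist_le_zero.mp hpq]
  exact hq

/-- two points whose joining segment misses K have the same gate -/
lemma gate_const {K : Set T} {c c' p p' : T} (hpK : p ∈ K) (hp'K : p' ∈ K)
    (hgp : ∀ w ∈ K, MBtw c p w) (hgp' : ∀ w ∈ K, MBtw c' p' w)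
    (hdisj : ∀ y, MBtw c y c' → y ∉ K) : p = p' := by
  by_contra hne
  have hδ : 0 < dist p p' := dist_pos.mpr hne
  have h1 : MBtw c p p' := hgp p' hp'K
  have h2 : MBtw c' p' p := hgp' p hpK
  -- show p' lies between c and c'
  have e1 : gp p' c p = dist p p' := by
    have : dist c p + dist p p' = dist c p' := h1
    unfold gp
    linarith [dist_comm p' c, dist_comm p' p, dist_comm c p]
  have e2 : gp p' c' p = 0 := by
    have : dist c' p' + dist p' p = dist c' p := h2
    unfold gp
    linarith [dist_comm p' c', dist_comm p' p, dist_comm c' p]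
  have hbtw : MBtw c p' c' :=
    mbtw_comm (gp_propagate e2 (by rw [e1]; exact hδ))
  exact hdisj p' hbtw hp'K

end RT6

section Assemble
open RT RT2 RT3 RT4 RT5 RT6

variable {G T : Type*} [Group G] [MetricSpace T] [MulAction G T]

noncomputable def actHomeo (iso : ∀ g : G, Isometry fun x : T => g • x) (g : G) :
    T ≃ₜ T where
  toEquiv := MulAction.toPerm g
  continuous_toFun := (iso g).continuous
  continuous_invFun := (iso g⁻¹).continuous

lemma actHomeo_image (iso : ∀ g : G, Isometry fun x : T => g • x) (g : G) (S : Set T) :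
    (actHomeo iso g) '' S = g • S := rfl

lemma smul_closure (iso : ∀ g : G, Isometry fun x : T => g • x) (g : G) (S : Set T) :
    g • closure S = closure (g • S) := by
  rw [← actHomeo_image iso, ← actHomeo_image iso, Homeomorph.image_closure]

lemma tmin_invariant (iso : ∀ g : G, Isometry fun x : T => g • x) (g : G) :
    g • (⋃ h ∈ {h : G | ∀ x : T, h • x ≠ x}, axisSet' (T := T) G h)
      = ⋃ h ∈ {h : G | ∀ x : T, h • x ≠ x}, axisSet' (T := T) G h := by
  have key : ∀ k : G, ∀ w, w ∈ (⋃ h ∈ {h : G | ∀ x : T, h • x ≠ x}, axisSet' (T := T) G h) →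
      k • w ∈ (⋃ h ∈ {h : G | ∀ x : T, h • x ≠ x}, axisSet' (T := T) G h) := by
    intro k w hw
    simp only [Set.mem_iUnion, Set.mem_setOf_eq, exists_prop] at hw ⊢
    obtain ⟨m, hmH, hwm⟩ := hw
    refine ⟨k * m * k⁻¹, ?_, ?_⟩
    · intro u hu
      apply hmH (k⁻¹ • u)
      have : (k * m * k⁻¹) • u = k • m • k⁻¹ • u := by
        rw [mul_smul, mul_smul]
      rw [this] at hu
      calc m • k⁻¹ • u = k⁻¹ • k • m • k⁻¹ • u := by rw [inv_smul_smul]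
        _ = k⁻¹ • u := by rw [hu]
    · intro y
      have e1 : (k * m * k⁻¹) • (k • w) = k • (m • w) := by
        rw [mul_smul, mul_smul, inv_smul_smul]
      have e2 : dist (k • w) ((k * m * k⁻¹) • k • w) = dist w (m • w) := by
        rw [e1, dsmul iso]
      have e3 : dist y ((k * m * k⁻¹) • y) = dist (k⁻¹ • y) (m • (k⁻¹ • y)) := by
        have : (k * m * k⁻¹) • y = k • (m • (k⁻¹ • y)) := by rw [mul_smul, mul_smul]
        rw [this, ← dsmul iso k (k⁻¹ • y) (m • k⁻¹ • y), smul_inv_smul]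
      rw [e2, e3]
      exact hwm (k⁻¹ • y)
  apply Set.Subset.antisymm
  · rintro w ⟨w', hw', rfl⟩
    exact key g w' hw'
  · intro w hw
    refine ⟨g⁻¹ • w, key g⁻¹ w hw, ?_⟩
    simp

end Assemble

namespace RT3x
open RT RT2 RT3
variable {T : Type*} [MetricSpace T] [RealTree T]

lemma mconvex_closure {S : Set T} (hS : MConvex S) : MConvex (closure S) :=
  isPreconnected_mconvex (mconvex_isPreconnected hS).closure

lemma mconvex_ball (c : T) (r : ℝ) : MConvex (Metric.ball c r) := by
  intro v hv w hw y hy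
  rw [Metric.mem_ball] at *
  have hB := lemB (z := c) hy
  rcases le_max_iff.mp hB with h | h
  · have : dist y c ≤ dist c v := by
      linarith [dist_comm y c, dist_nonneg (x := v) (y := y)]
    linarith [dist_comm c v]
  · have : dist y c ≤ dist c w := by
      linarith [dist_comm y c, dist_nonneg (x := y) (y := w)]
    linarith [dist_comm c w]

end RT3x

open RT RT2 RT3 RT3x RT4 RT5 RT6 in
/-- if the action contains a hyperbolic element, then the closure of the
minimal subtree together with the closures of the connected components of its complement
form a transverse covering of T, and every arc is covered by at most three members. -/
theorem stmt_15 {G T : Type*} [Group G] [MetricSpace T] [RealTree T] [MulAction G T]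
    (iso : ∀ g : G, Isometry fun x : T => g • x)
    (hhyp : ∃ g : G, ∀ x : T, g • x ≠ x)
    (Tmin : Set T)
    (hTmin : Tmin = ⋃ g ∈ {g : G | ∀ x : T, g • x ≠ x}, axisSet G g)
    (Ys₀ : Set (Set T))
    (hYs₀ : Ys₀ = {Z : Set T | ∃ x ∈ (closure Tmin)ᶜ,
      Z = closure (connectedComponentIn (closure Tmin)ᶜ x)}) :
    TransverseCovering G (insert (closure Tmin) Ys₀) ∧
      ∀ I : Set T, IsArc I →
        ∃ Y₁ ∈ insert (closure Tmin) Ys₀, ∃ Y₂ ∈ insert (closure Tmin) Ys₀,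
          ∃ Y₃ ∈ insert (closure Tmin) Ys₀, I ⊆ Y₁ ∪ Y₂ ∪ Y₃ := by
  classical
  have haxis : (⋃ g ∈ {g : G | ∀ x : T, g • x ≠ x}, axisSet G g)
      = ⋃ g ∈ {g : G | ∀ x : T, g • x ≠ x}, axisSet' (T := T) G g := rfl
  have hTconvex : MConvex Tmin := by rw [hTmin, haxis]; exact tmin_mconvex iso
  set K := closure Tmin with hKdef
  have hKcl : IsClosed K := isClosed_closure
  have hKconv : MConvex K := mconvex_closure hTconvex
  set U := Kᶜ with hUdef
  have hUopen : IsOpen U := hKcl.isOpen_compl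
  have hKinv : ∀ g : G, g • K = K := by
    intro g
    rw [hKdef, smul_closure iso, hTmin, haxis, tmin_invariant iso]
  have hUinv : ∀ g : G, g • U = U := by
    intro g
    ext w
    rw [Set.mem_smul_set_iff_inv_smul_mem]
    have h1 : g⁻¹ • w ∈ K ↔ w ∈ K := by
      rw [← Set.mem_smul_set_iff_inv_smul_mem, hKinv g]
    show g⁻¹ • w ∈ Kᶜ ↔ w ∈ Kᶜ
    simp [Set.mem_compl_iff, h1]
  have hCCconv : ∀ x : T, MConvex (connectedComponentIn U x) :=
    fun _ => isPreconnected_mconvex isPreconnected_connectedComponentIn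
  have hYmem : ∀ Y ∈ Ys₀, ∃ x ∈ U, Y = closure (connectedComponentIn U x) := by
    intro Y hY; rw [hYs₀] at hY; exact hY
  have hYof : ∀ x ∈ U, closure (connectedComponentIn U x) ∈ Ys₀ := by
    intro x hx; rw [hYs₀]; exact ⟨x, hx, rfl⟩
  have common_gate : ∀ x, x ∈ U → K.Nonempty →
      ∃ p, p ∈ K ∧ ∀ c ∈ connectedComponentIn U x, ∀ w ∈ K, MBtw c p w := by
    intro x hx hKne
    obtain ⟨p, hpK, hpg, _⟩ := gate_exists hKcl hKconv hKne x
    refine ⟨p, hpK, fun c hc w hw => ?_⟩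
    obtain ⟨q, hqK, hqg, _⟩ := gate_exists hKcl hKconv hKne c
    have hxC : x ∈ connectedComponentIn U x := mem_connectedComponentIn hx
    have hqp : q = p := by
      refine gate_const hqK hpK hqg hpg (fun y hy => ?_)
      have hyC : y ∈ connectedComponentIn U x := hCCconv x c hc x hxC hy
      exact connectedComponentIn_subset U x hyC
    rw [← hqp]; exact hqg w hw
  have cap_K : ∀ x, x ∈ U → ∀ w, w ∈ closure (connectedComponentIn U x) → w ∈ K →
      ∀ p, p ∈ K → (∀ c ∈ connectedComponentIn U x, ∀ w' ∈ K, MBtw c p w') → w = p := by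
    intro x hx w hwcl hwK p hpK hg
    have hd : dist w p ≤ 0 := by
      by_contra hlt
      push_neg at hlt
      obtain ⟨c, hc, hdc⟩ := Metric.mem_closure_iff.mp hwcl (dist w p / 3) (by linarith)
      have hb : MBtw c p w := hg c hc w hwK
      have h1 : dist c p ≤ dist c w := mbtw_dist_left hb
      have h2 : dist w p ≤ dist w c + dist c p := dist_triangle w c p
      linarith [dist_comm w c]
    exact dist_le_zero.mp hd
  have clU : ∀ x, x ∈ U →
      closure (connectedComponentIn U x) ∩ U ⊆ connectedComponentIn U x := by
    rintro x hx z ⟨hzcl, hzU⟩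
    obtain ⟨r, hr, hball⟩ := Metric.isOpen_iff.mp hUopen z hzU
    obtain ⟨c, hc, hdc⟩ := Metric.mem_closure_iff.mp hzcl r hr
    have hcball : c ∈ Metric.ball z r := by rw [Metric.mem_ball, dist_comm]; exact hdc
    have hsub : Metric.ball z r ⊆ connectedComponentIn U c :=
      (mconvex_isPreconnected (mconvex_ball z r)).subset_connectedComponentIn hcball hball
    rw [connectedComponentIn_eq hc]
    exact hsub (Metric.mem_ball_self hr)
  have split : ∀ u v w : T, MBtw u w v → w ∉ K →
      (∀ y, MBtw u y w → y ∉ K) ∨ (∀ y, MBtw w y v → y ∉ K) := by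
    intro u v w hw hwK
    by_contra hcon
    push_neg at hcon
    obtain ⟨⟨k₁, hk₁b, hk₁K⟩, ⟨k₂, hk₂b, hk₂K⟩⟩ := hcon
    have hbtw : MBtw k₁ w k₂ := by
      have e1 : dist u k₁ + dist k₁ w = dist u w := hk₁b
      have e2 : dist w k₂ + dist k₂ v = dist w v := hk₂b
      have e3 : dist u w + dist w v = dist u v := hw
      have t1 : dist u v ≤ dist u k₁ + dist k₁ v := dist_triangle u k₁ v
      have t2 : dist k₁ v ≤ dist k₁ k₂ + dist k₂ v := dist_triangle k₁ k₂ v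
      have t3 : dist k₁ k₂ ≤ dist k₁ w + dist w k₂ := dist_triangle k₁ w k₂
      show dist k₁ w + dist w k₂ = dist k₁ k₂
      linarith
    exact hwK (hKconv k₁ hk₁K k₂ hk₂K hbtw)
  have inComp : ∀ u w : T, (∀ y, MBtw u y w → y ∉ K) →
      u ∈ U ∧ w ∈ connectedComponentIn U u := by
    intro u w hseg
    have huU : u ∈ U := hseg u (mbtw_self_left u w)
    have hsub : seg u w ⊆ connectedComponentIn U u :=
      (seg_preconnected u w).subset_connectedComponentIn (mbtw_self_left u w)
        (fun y hy => hseg y hy)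
    exact ⟨huU, hsub (mbtw_self_right u w)⟩
  have three : ∀ I : Set T, IsArc I →
      ∃ Y₁ ∈ insert K Ys₀, ∃ Y₂ ∈ insert K Ys₀, ∃ Y₃ ∈ insert K Ys₀,
        I ⊆ Y₁ ∪ Y₂ ∪ Y₃ := by
    rintro I ⟨u, v, huv, rfl⟩
    have hYu : ∃ Yu ∈ insert K Ys₀, ∀ w, MBtw u w v → w ∉ K →
        (∀ y, MBtw u y w → y ∉ K) → w ∈ Yu := by
      by_cases huU : u ∈ U
      · refine ⟨closure (connectedComponentIn U u),
          Set.mem_insert_of_mem _ (hYof u huU), ?_⟩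
        intro w _ _ hseg
        exact subset_closure (inComp u w hseg).2
      · refine ⟨K, Set.mem_insert _ _, ?_⟩
        intro w _ _ hseg
        exact absurd ((inComp u w hseg).1) huU
    have hYv : ∃ Yv ∈ insert K Ys₀, ∀ w, MBtw u w v → w ∉ K →
        (∀ y, MBtw w y v → y ∉ K) → w ∈ Yv := by
      by_cases hvU : v ∈ U
      · refine ⟨closure (connectedComponentIn U v),
          Set.mem_insert_of_mem _ (hYof v hvU), ?_⟩
        intro w _ _ hseg
        exact subset_closure (inComp v w (fun y hy => hseg y (mbtw_comm hy))).2
      · refine ⟨K, Set.mem_insert _ _, ?_⟩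
        intro w _ _ hseg
        exact absurd ((inComp v w (fun y hy => hseg y (mbtw_comm hy))).1) hvU
    obtain ⟨Yu, hYum, hYuP⟩ := hYu
    obtain ⟨Yv, hYvm, hYvP⟩ := hYv
    refine ⟨K, Set.mem_insert _ _, Yu, hYum, Yv, hYvm, ?_⟩
    intro w hw
    by_cases hwK : w ∈ K
    · exact Or.inl (Or.inl hwK)
    rcases split u v w hw hwK with hl | hr
    · exact Or.inl (Or.inr (hYuP w hw hwK hl))
    · exact Or.inr (hYvP w hw hwK hr)
  refine ⟨⟨?_, ?_, ?_, ?_, ?_⟩, three⟩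
  · intro Y hY
    rcases Set.mem_insert_iff.mp hY with rfl | hY₀
    · exact ⟨hKcl, hKconv⟩
    · obtain ⟨x, hx, rfl⟩ := hYmem Y hY₀
      exact ⟨isClosed_closure, mconvex_closure (hCCconv x)⟩
  · apply Set.eq_univ_of_forall
    intro w
    by_cases hwK : w ∈ K
    · exact ⟨K, Set.mem_insert _ _, hwK⟩
    · exact ⟨closure (connectedComponentIn U w), Set.mem_insert_of_mem _ (hYof w hwK),
        subset_closure (mem_connectedComponentIn hwK)⟩
  · intro g Y hY
    rcases Set.mem_insert_iff.mp hY with rfl | hY₀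
    · rw [hKinv g]; exact Set.mem_insert _ _
    · obtain ⟨x, hx, rfl⟩ := hYmem Y hY₀
      have hgx : g • x ∈ U := by rw [← hUinv g]; exact ⟨x, hx, rfl⟩
      have h2 : g • connectedComponentIn U x = connectedComponentIn U (g • x) := by
        rw [← actHomeo_image iso]
        rw [(actHomeo iso g).image_connectedComponentIn hx]
        rw [actHomeo_image iso, hUinv g]
        rfl
      rw [smul_closure iso, h2]
      exact Set.mem_insert_of_mem _ (hYof _ hgx)
  · intro Y₁ hY₁ Y₂ hY₂ hne
    intro w₁ hw₁ w₂ hw₂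
    rcases Set.mem_insert_iff.mp hY₁ with rfl | h₁
    · rcases Set.mem_insert_iff.mp hY₂ with rfl | h₂
      · exact absurd rfl hne
      · obtain ⟨x₂, hx₂, rfl⟩ := hYmem Y₂ h₂
        have hKne : K.Nonempty := ⟨w₁, hw₁.1⟩
        obtain ⟨p, hpK, hpg⟩ := common_gate x₂ hx₂ hKne
        rw [cap_K x₂ hx₂ w₁ hw₁.2 hw₁.1 p hpK hpg,
          cap_K x₂ hx₂ w₂ hw₂.2 hw₂.1 p hpK hpg]
    · rcases Set.mem_insert_iff.mp hY₂ with rfl | h₂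
      · obtain ⟨x₁, hx₁, rfl⟩ := hYmem Y₁ h₁
        have hKne : K.Nonempty := ⟨w₁, hw₁.2⟩
        obtain ⟨p, hpK, hpg⟩ := common_gate x₁ hx₁ hKne
        rw [cap_K x₁ hx₁ w₁ hw₁.1 hw₁.2 p hpK hpg,
          cap_K x₁ hx₁ w₂ hw₂.1 hw₂.2 p hpK hpg]
      · obtain ⟨x₁, hx₁, rfl⟩ := hYmem Y₁ h₁
        obtain ⟨x₂, hx₂, rfl⟩ := hYmem Y₂ h₂
        have hKside : ∀ w, w ∈ closure (connectedComponentIn U x₁) →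
            w ∈ closure (connectedComponentIn U x₂) → w ∈ K := by
          intro w hwa hwb
          by_contra hwK
          have h1 : w ∈ connectedComponentIn U x₁ := clU x₁ hx₁ ⟨hwa, hwK⟩
          have h2 : w ∈ connectedComponentIn U x₂ := clU x₂ hx₂ ⟨hwb, hwK⟩
          exact hne (by
            rw [(connectedComponentIn_eq h1).trans (connectedComponentIn_eq h2).symm])
        have hw₁K := hKside w₁ hw₁.1 hw₁.2
        have hKne : K.Nonempty := ⟨w₁, hw₁K⟩
        obtain ⟨p, hpK, hpg⟩ := common_gate x₁ hx₁ hKne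
        rw [cap_K x₁ hx₁ w₁ hw₁.1 hw₁K p hpK hpg,
          cap_K x₁ hx₁ w₂ hw₂.1 (hKside w₂ hw₂.1 hw₂.2) p hpK hpg]
  · intro I hI
    obtain ⟨Y₁, h₁, Y₂, h₂, Y₃, h₃, hsub⟩ := three I hI
    refine ⟨{Y₁, Y₂, Y₃}, ?_, ?_, ?_⟩
    · exact ((Set.finite_singleton Y₃).insert Y₂).insert Y₁
    · rintro Y (rfl | rfl | rfl)
      exacts [h₁, h₂, h₃]
    · intro w hw
      rcases hsub hw with (h | h) | h
      · exact ⟨Y₁, by simp, h⟩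
      · exact ⟨Y₂, by simp, h⟩
      · exact ⟨Y₃, by simp, h⟩
end

section
/- Let G act by isometries on a real tree T such that every arc stabilizer is trivial. Suppose 𝒴 is a transverse covering of T with skeleton S, Y_v ∈ 𝒴 has a dense minimal subtree under its setwise stabilizer, and x ∈ Y_v is a point not in the minimal subtree of Y_v. Then the stabilizer of the pair (x, Y_v), i.e. {g ∈ G : g·Y_v = Y_v and g·x = x}, equals the pointwise stabilizer of Y_v. -/
open Pointwise

lemma mbtw_trans {T : Type*} [MetricSpace T] {x p m z : T}
    (h1 : MBtw x p m) (h2 : MBtw x m z) : MBtw x p z := by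
  unfold MBtw at *
  have h3 : dist p z ≤ dist p m + dist m z := dist_triangle _ _ _
  have h4 : dist x z ≤ dist x p + dist p z := dist_triangle _ _ _
  linarith

lemma exists_median {T : Type*} [MetricSpace T] [RealTree T] (x y z : T) :
    ∃ m, MBtw x m y ∧ MBtw x m z ∧ MBtw y m z := by
  set r := (dist x y + dist x z - dist y z) / 2 with hr
  have htri1 : dist x z ≤ dist x y + dist y z := dist_triangle x y z
  have htri2 : dist y z ≤ dist y x + dist x z := dist_triangle y x z
  rw [dist_comm y x] at htri2
  have h1 : 0 ≤ r := by rw [hr]; linarith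
  have h2 : r ≤ dist x y := by rw [hr]; linarith
  obtain ⟨m, hm, hdm⟩ := RealTree.exists_btw x y r ⟨h1, h2⟩
  have hm' : dist x m + dist m y = dist x y := hm
  have h4 := RealTree.fourPoint m z x y
  have heq : dist m x + dist z y = dist m y + dist z x := by
    rw [dist_comm m x, dist_comm z y, dist_comm z x]; linarith
  rw [heq, max_self] at h4
  have hlow : dist x z ≤ dist x m + dist m z := dist_triangle x m z
  have hmz : dist m z = dist x z - r := by
    rw [dist_comm z x] at h4; linarith
  have hcm : dist y m = dist m y := dist_comm y m
  refine ⟨m, hm, ?_, ?_⟩ <;> unfold MBtw <;> rw [hmz] <;> linarith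

lemma seg_unique {T : Type*} [MetricSpace T] [RealTree T] {x p q z : T}
    (hp : MBtw x p z) (hq : MBtw x q z) (h : dist x p = dist x q) : p = q := by
  have h4 := RealTree.fourPoint p q x z
  unfold MBtw at hp hq
  have harm : dist p x + dist q z = dist p z + dist q x := by
    rw [dist_comm p x, dist_comm q x]; linarith
  rw [harm, max_self] at h4
  have : dist p q ≤ 0 := by rw [dist_comm q x] at h4; linarith
  exact dist_le_zero.mp this

/-- if every element fixing an arc of Yv fixes Yv pointwise, Yv is a member
of a transverse covering with a dense minimal subtree M under its setwise stabilizer, and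
x ∈ Yv lies outside M, then the stabilizer of the pair (x, Yv) is the pointwise stabilizer
of Yv. -/
theorem stmt_16 {G T : Type*} [Group G] [MetricSpace T] [RealTree T] [MulAction G T]
    (iso : ∀ g : G, Isometry fun x : T => g • x)
    (Ys : Set (Set T)) (htc : TransverseCovering G Ys)
    (Yv : Set T) (hYv : Yv ∈ Ys)
    (harc : ∀ g : G, (∃ I, IsArc I ∧ I ⊆ Yv ∧ ∀ y ∈ I, g • y = y) → ∀ y ∈ Yv, g • y = y)
    (M : Set T) (hMsub : M ⊆ Yv) (hMne : M.Nonempty) (hMconv : MConvex M)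
    (hMinv : ∀ g : G, g • Yv = Yv → g • M = M)
    (hMdense : Yv ⊆ closure M)
    (hMmin : ∀ M' : Set T, M' ⊆ Yv → M'.Nonempty → MConvex M' →
      (∀ g : G, g • Yv = Yv → g • M' = M') → M ⊆ M')
    (x : T) (hx : x ∈ Yv) (hxM : x ∉ M) :
    ∀ g : G, (g • Yv = Yv ∧ g • x = x) ↔ (∀ y ∈ Yv, g • y = y) := by
  intro g
  constructor
  · rintro ⟨hgY, hgx⟩
    have hgM : g • M = M := hMinv g hgY
    obtain ⟨y, hy⟩ := hMne
    have hgy : g • y ∈ M := by rw [← hgM]; exact Set.smul_mem_smul_set hy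
    obtain ⟨m, hmy, hmz, hyz⟩ := exists_median x y (g • y)
    have hmM : m ∈ M := hMconv y hy (g • y) hgy hyz
    have hxm : x ≠ m := fun h => hxM (h ▸ hmM)
    have hfix : ∀ p ∈ seg x m, g • p = p := by
      intro p hp
      have hp' : MBtw x p m := hp
      have hpy : MBtw x p y := mbtw_trans hp' hmy
      have hpz : MBtw x p (g • y) := mbtw_trans hp' hmz
      have e1 : dist x (g • p) = dist x p := by
        calc dist x (g • p) = dist (g • x) (g • p) := by rw [hgx]
          _ = dist x p := (iso g).dist_eq x p
      have e2 : dist (g • p) (g • y) = dist p y := (iso g).dist_eq p y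
      have e3 : dist x (g • y) = dist x y := by
        calc dist x (g • y) = dist (g • x) (g • y) := by rw [hgx]
          _ = dist x y := (iso g).dist_eq x y
      have hgp : MBtw x (g • p) (g • y) := by
        unfold MBtw; rw [e1, e2, e3]; exact hpy
      exact seg_unique hgp hpz e1
    refine harc g ⟨seg x m, ⟨x, m, hxm, rfl⟩, ?_, hfix⟩
    exact (htc.1 Yv hYv).2 x hx m (hMsub hmM)
  · intro hfix
    refine ⟨?_, hfix x hx⟩
    ext t
    constructor
    · rintro ⟨s, hs, rfl⟩
      show g • s ∈ Yv
      rw [hfix s hs]; exact hs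
    · intro ht; exact ⟨t, ht, hfix t ht⟩
end

section
/- Let T be a G-real-tree that splits as a graph of actions with skeleton S and vertex trees (Y_v). If the vertex trees indexed by a G-invariant subset V' of vertices are equivariantly collapsed to points, yielding a tree T' with induced map p : T → T', then p preserves alignment; consequently, if the G-action on T is minimal then the G-action on T' is minimal. -/
open Pointwise

/-!
Parametrise a segment `[x, z]` by `[0, d(x, z)]`. Finitely many pieces of the transverse
covering cover it, and their preimages are closed, so `[x, z]` splits into finitely many
subsegments each inside one piece. On a piece, `p` is either an isometry or constant, so it maps
the subsegment onto the segment between the images. Consecutive subsegments glue without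
backtracking because the fibres of `p` are convex: a fold at `b` would put two points on either
side of `b` into one fibre, and `b` with them. Hence `p [x, z] = [p x, p z]`, which is alignment
preservation; then the preimage of an invariant subtree of `T'` is an invariant subtree of `T`,
which gives minimality.
-/

section Metric

variable {T : Type*} [MetricSpace T]

lemma mbtw_self_left (x z : T) : MBtw x x z := by simp [MBtw]

lemma mbtw_self_right (x z : T) : MBtw x z z := by simp [MBtw]

lemma MBtw.symm {x y z : T} (h : MBtw x y z) : MBtw z y x := by
  unfold MBtw at h ⊢
  rw [dist_comm z y, dist_comm y x, dist_comm z x]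
  linarith

lemma MBtw.eq_of_self {x y : T} (h : MBtw x y x) : y = x := by
  unfold MBtw at h
  rw [dist_self, dist_comm y x] at h
  exact (dist_le_zero.mp (by linarith [dist_nonneg (x := x) (y := y)])).symm

lemma seg_subset_seg_left {x y z : T} (h : MBtw x y z) : seg x y ⊆ seg x z := by
  intro w hw
  have hw' : dist x w + dist w y = dist x y := hw
  show dist x w + dist w z = dist x z
  unfold MBtw at h
  linarith [dist_triangle x w z, dist_triangle w y z]

lemma seg_subset_seg_right {x y z : T} (h : MBtw x y z) : seg y z ⊆ seg x z := by
  rw [seg_comm y, seg_comm x]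
  exact seg_subset_seg_left h.symm

lemma MBtw.of_mbtw_left_right {a b c u v : T} (h : MBtw a b c) (hv : MBtw a v b)
    (hu : MBtw b u c) : MBtw v b u := by
  unfold MBtw at *
  linarith [dist_triangle v b u, dist_triangle a v c, dist_triangle v u c]

lemma mconvex_preimage_singleton {T' : Type*} {p : T → T'}
    {Ys' : Set (Set T)} (hfib : ∀ x y : T, p x = p y ↔ (x = y ∨ seg x y ⊆ ⋃₀ Ys'))
    (q : T') : MConvex (p ⁻¹' {q}) := by
  intro u (hu : p u = q) v (hv : p v = q) w hw
  rcases (hfib u v).1 (hu.trans hv.symm) with rfl | hcol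
  · rwa [Set.mem_preimage, hw.eq_of_self]
  · exact ((hfib u w).2 (Or.inr ((seg_subset_seg_left hw).trans hcol))).symm.trans hu

end Metric

section RealTree

variable {T : Type*} [MetricSpace T] [RealTree T]

lemma eq_of_mbtw_of_dist_eq {x z y y' : T} (h : MBtw x y z) (h' : MBtw x y' z)
    (he : dist x y = dist x y') : y = y' := by
  have h4 := RealTree.fourPoint x z y y'
  unfold MBtw at h h'
  rw [dist_comm z y', dist_comm z y, show dist x y + dist y' z = dist x z by linarith,
    show dist x y' + dist y z = dist x z by linarith, max_self] at h4
  exact dist_le_zero.mp (by linarith)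

lemma MBtw.mbtw_of_dist_le {x z a b : T} (ha : MBtw x a z) (hb : MBtw x b z)
    (hle : dist x a ≤ dist x b) : MBtw x a b ∧ MBtw a b z := by
  have h4 := RealTree.fourPoint x z a b
  unfold MBtw at ha hb ⊢
  rw [dist_comm z a, dist_comm z b, max_eq_right (by linarith)] at h4
  constructor <;> linarith [dist_triangle x a b, dist_triangle a b z]

lemma seg_eq_union {a b c : T} (h : MBtw a b c) : seg a c = seg a b ∪ seg b c := by
  refine Set.Subset.antisymm (fun w hw => ?_)
    (Set.union_subset (seg_subset_seg_left h) (seg_subset_seg_right h))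
  rcases le_total (dist a w) (dist a b) with hle | hle
  · exact Or.inl (hw.mbtw_of_dist_le h hle).1
  · exact Or.inr (h.mbtw_of_dist_le hw hle).2

lemma exists_median_s18 (A B C : T) : ∃ m, MBtw A m C ∧ MBtw A m B ∧ MBtw B m C := by
  -- `m` is the point of `[A, C]` at distance the Gromov product `(B | C)_A` from `A`.
  obtain ⟨m, hm, hdm⟩ := RealTree.exists_btw A C ((dist A B + dist A C - dist B C) / 2)
    ⟨by linarith [dist_triangle B A C, dist_comm A B],
      by linarith [dist_triangle A C B, dist_comm B C]⟩
  have h4 := RealTree.fourPoint B m A C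
  have hm' : dist A m + dist m C = dist A C := hm
  rw [dist_comm B A, dist_comm m A,
    show dist A B + dist m C = dist B C + dist A m by rw [hdm]; linarith, max_self] at h4
  refine ⟨m, hm, ?_, ?_⟩ <;> unfold MBtw <;>
    linarith [dist_triangle A m B, dist_comm m B]

/-- The unit-speed geodesic from `x` to `z`, extended constantly outside `[0, dist x z]`. -/
noncomputable def geodesic (x z : T) (r : ℝ) : T :=
  (RealTree.exists_btw x z _ (Set.projIcc 0 (dist x z) dist_nonneg r).2).choose

lemma geodesic_spec (x z : T) (r : ℝ) :
    MBtw x (geodesic x z r) z ∧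
      dist x (geodesic x z r) = Set.projIcc 0 (dist x z) dist_nonneg r :=
  (RealTree.exists_btw x z _ (Set.projIcc 0 (dist x z) dist_nonneg r).2).choose_spec

lemma dist_geodesic (x z : T) (r s : ℝ) :
    dist (geodesic x z r) (geodesic x z s) =
      |(Set.projIcc 0 (dist x z) dist_nonneg r : ℝ) - Set.projIcc 0 (dist x z) dist_nonneg s| := by
  obtain ⟨hr, hdr⟩ := geodesic_spec x z r
  obtain ⟨hs, hds⟩ := geodesic_spec x z s
  rcases le_total (dist x (geodesic x z r)) (dist x (geodesic x z s)) with hle | hle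
  · have h : MBtw x _ _ := (hr.mbtw_of_dist_le hs hle).1
    unfold MBtw at h
    rw [abs_of_nonpos (by linarith)]
    linarith
  · have h : MBtw x _ _ := (hs.mbtw_of_dist_le hr hle).1
    unfold MBtw at h
    rw [abs_of_nonneg (by linarith), dist_comm]
    linarith

lemma geodesic_mbtw (x z : T) {a b c : ℝ} (hab : a ≤ b) (hbc : b ≤ c) :
    MBtw (geodesic x z a) (geodesic x z b) (geodesic x z c) := by
  have hab' := Set.monotone_projIcc (dist_nonneg (x := x) (y := z)) hab
  have hbc' := Set.monotone_projIcc (dist_nonneg (x := x) (y := z)) hbc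
  rw [← Subtype.coe_le_coe] at hab' hbc'
  unfold MBtw
  rw [dist_geodesic, dist_geodesic, dist_geodesic, abs_of_nonpos (by linarith),
    abs_of_nonpos (by linarith), abs_of_nonpos (by linarith)]
  ring

lemma continuous_geodesic (x z : T) : Continuous (geodesic x z) :=
  (LipschitzWith.of_dist_le_mul (K := 1) fun r s => by
    rw [dist_geodesic, NNReal.coe_one, one_mul, Real.dist_eq]
    exact Set.abs_projIcc_sub_projIcc _).continuous

lemma geodesic_zero (x z : T) : geodesic x z 0 = x := by
  have h := (geodesic_spec x z 0).2
  rw [Set.projIcc_left] at h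
  exact (dist_eq_zero.mp h).symm

lemma geodesic_dist (x z : T) : geodesic x z (dist x z) = z := by
  obtain ⟨hb, hd⟩ := geodesic_spec x z (dist x z)
  rw [Set.projIcc_right] at hd
  unfold MBtw at hb
  exact dist_eq_zero.mp (by linarith)

end RealTree

theorem rel_of_Icc_subset_biUnion {R : ℝ → ℝ → Prop}
    (htrans : ∀ ⦃a b c⦄, a ≤ b → b ≤ c → R a b → R b c → R a c)
    (F : Finset (Set ℝ)) (hclosed : ∀ K ∈ F, IsClosed K)
    (hR : ∀ K ∈ F, ∀ a ∈ K, ∀ b ∈ K, a ≤ b → R a b) :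
    ∀ ⦃s t⦄, s ≤ t → Set.Icc s t ⊆ ⋃ K ∈ F, K → R s t := by
  induction F using Finset.strongInduction with
  | H F ih =>
  intro s t hst hcov
  obtain ⟨K, hK, hsK⟩ := Set.mem_iUnion₂.mp (hcov (Set.left_mem_Icc.2 hst))
  -- Walk along `K` as far as possible, then cover the rest without `K`.
  set v := sSup (K ∩ Set.Icc s t)
  have hbdd : BddAbove (K ∩ Set.Icc s t) := bddAbove_Icc.mono Set.inter_subset_right
  have hv : v ∈ K ∩ Set.Icc s t :=
    ((hclosed K hK).inter isClosed_Icc).csSup_mem ⟨s, hsK, Set.left_mem_Icc.2 hst⟩ hbdd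
  have hsv : R s v := hR K hK s hsK v hv.1 hv.2.1
  rcases hv.2.2.eq_or_lt with hvt | hvt
  · rwa [hvt] at hsv
  have hrest : Set.Ioc v t ⊆ ⋃ K' ∈ F.erase K, K' := by
    intro r hr
    obtain ⟨K', hK', hrK'⟩ := Set.mem_iUnion₂.mp
      (hcov ⟨hv.2.1.trans hr.1.le, hr.2⟩)
    refine Set.mem_iUnion₂.mpr ⟨K', Finset.mem_erase.mpr ⟨?_, hK'⟩, hrK'⟩
    rintro rfl
    exact hr.1.not_ge (le_csSup hbdd ⟨hrK', hv.2.1.trans hr.1.le, hr.2⟩)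
  have hvt' : R v t := by
    refine ih _ (Finset.erase_ssubset hK) (fun K' hK' => hclosed K' (Finset.mem_of_mem_erase hK'))
      (fun K' hK' => hR K' (Finset.mem_of_mem_erase hK')) hvt.le ?_
    rw [← closure_Ioc hvt.ne]
    exact closure_minimal hrest
      (isClosed_biUnion_finset fun K' hK' => hclosed K' (Finset.mem_of_mem_erase hK'))
  exact htrans hv.2.1 hvt.le hsv hvt'

section Collapse

variable {T T' : Type*} [MetricSpace T] [MetricSpace T'] [RealTree T] [RealTree T']

lemma image_seg_eq_of_isometricOn {f : T → T'} {a b : T}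
    (hf : ∀ u ∈ seg a b, ∀ v ∈ seg a b, dist (f u) (f v) = dist u v) :
    f '' seg a b = seg (f a) (f b) := by
  have ha := mbtw_self_left a b
  have hb := mbtw_self_right a b
  have hmap : ∀ u ∈ seg a b, MBtw (f a) (f u) (f b) := fun u hu => by
    unfold MBtw
    rw [hf a ha u hu, hf u hu b hb, hf a ha b hb]
    exact hu
  refine Set.Subset.antisymm (Set.image_subset_iff.mpr hmap) fun w hw => ?_
  have hw' : dist (f a) w + dist w (f b) = dist (f a) (f b) := hw
  obtain ⟨u, hu, hdu⟩ := RealTree.exists_btw a b (dist (f a) w)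
    ⟨dist_nonneg, by rw [← hf a ha b hb]; linarith [dist_nonneg (x := w) (y := f b)]⟩
  exact ⟨u, hu, eq_of_mbtw_of_dist_eq (hmap u hu) hw (by rw [hf a ha u hu, hdu])⟩

variable {p : T → T'} {Ys' : Set (Set T)}

lemma image_seg_eq_of_mbtw (hfib : ∀ q, MConvex (p ⁻¹' {q})) {a b c : T} (h : MBtw a b c)
    (hab : p '' seg a b = seg (p a) (p b)) (hbc : p '' seg b c = seg (p b) (p c)) :
    p '' seg a c = seg (p a) (p c) := by
  -- The median of `p a, p b, p c` is `p v = p u` with `v ∈ [a, b]`, `u ∈ [b, c]`; then `b ∈ [v, u]`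
  -- lies in the same (convex) fibre, so the median is `p b`: no backtracking at `b`.
  obtain ⟨m, hmac, hmab, hmbc⟩ := exists_median_s18 (p a) (p b) (p c)
  obtain ⟨v, hv, rfl⟩ : m ∈ p '' seg a b := hab ▸ hmab
  obtain ⟨u, hu, huv⟩ : p v ∈ p '' seg b c := hbc ▸ hmbc
  have hpb : p b = p v := hfib (p v) v rfl u huv (h.of_mbtw_left_right hv hu)
  rw [seg_eq_union h, Set.image_union, hab, hbc, ← seg_eq_union (hpb ▸ hmac)]


lemma image_seg_eq_of_mem_covering {Ys : Set (Set T)}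
    (hiso : ∀ Y ∈ Ys \ Ys', ∀ x ∈ Y, ∀ y ∈ Y, dist (p x) (p y) = dist x y)
    (hfib : ∀ x y : T, p x = p y ↔ (x = y ∨ seg x y ⊆ ⋃₀ Ys'))
    {Y : Set T} (hY : Y ∈ Ys) (hYc : MConvex Y) {a b : T} (ha : a ∈ Y) (hb : b ∈ Y) :
    p '' seg a b = seg (p a) (p b) := by
  have hsub := hYc a ha b hb
  by_cases hY' : Y ∈ Ys'
  · have hconst : ∀ w ∈ seg a b, p w = p a := fun w hw =>
      ((hfib a w).2 (Or.inr fun w' hw' => ⟨Y, hY', hsub (seg_subset_seg_left hw hw')⟩)).symm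
    rw [hconst b (mbtw_self_right a b), seg_self]
    exact Set.eq_singleton_iff_unique_mem.2
      ⟨⟨a, mbtw_self_left a b, rfl⟩, by rintro _ ⟨w, hw, rfl⟩; exact hconst w hw⟩
  · exact image_seg_eq_of_isometricOn fun u hu v hv =>
      hiso Y ⟨hY, hY'⟩ u (hsub hu) v (hsub hv)

theorem image_seg_eq_of_transverseCovering {G : Type*} [Group G] [MulAction G T]
    {Ys : Set (Set T)} (htc : TransverseCovering G Ys)
    (hiso : ∀ Y ∈ Ys \ Ys', ∀ x ∈ Y, ∀ y ∈ Y, dist (p x) (p y) = dist x y)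
    (hfib : ∀ x y : T, p x = p y ↔ (x = y ∨ seg x y ⊆ ⋃₀ Ys')) (x z : T) :
    p '' seg x z = seg (p x) (p z) := by
  rcases eq_or_ne x z with rfl | hxz
  · rw [seg_self, seg_self, Set.image_singleton]
  obtain ⟨F, hFfin, hFsub, hFcov⟩ := htc.2.2.2.2 (seg x z) ⟨x, z, hxz, rfl⟩
  have key := rel_of_Icc_subset_biUnion
    (R := fun s t => p '' seg (geodesic x z s) (geodesic x z t) =
      seg (p (geodesic x z s)) (p (geodesic x z t)))
    (fun a b c hab hbc => image_seg_eq_of_mbtw (mconvex_preimage_singleton hfib)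
      (geodesic_mbtw x z hab hbc))
    (hFfin.toFinset.image (geodesic x z ⁻¹' ·))
    (by
      simp only [Finset.mem_image, Set.Finite.mem_toFinset, forall_exists_index, and_imp,
        forall_apply_eq_imp_iff₂]
      exact fun Y hY => (htc.1 Y (hFsub hY)).1.preimage (continuous_geodesic x z))
    (by
      simp only [Finset.mem_image, Set.Finite.mem_toFinset, forall_exists_index, and_imp,
        forall_apply_eq_imp_iff₂]
      exact fun Y hY a ha b hb _ => image_seg_eq_of_mem_covering hiso hfib (hFsub hY)
        (htc.1 Y (hFsub hY)).2 ha hb)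
    (dist_nonneg (x := x) (y := z)) (fun r _ => by
      obtain ⟨Y, hY, hrY⟩ := hFcov (geodesic_spec x z r).1
      simp only [Set.mem_iUnion, Finset.mem_image, Set.Finite.mem_toFinset]
      exact ⟨_, ⟨Y, hY, rfl⟩, hrY⟩)
  rwa [geodesic_zero, geodesic_dist] at key

end Collapse

theorem MinimalAction.of_surjective {G T T' : Type*} [Group G] [MetricSpace T] [MetricSpace T']
    [MulAction G T] [MulAction G T'] {p : T → T'} (hsurj : Function.Surjective p)
    (hequiv : ∀ (g : G) (x : T), p (g • x) = g • p x)
    (halign : ∀ x y z : T, MBtw x y z → MBtw (p x) (p y) (p z)) (hmin : MinimalAction G T) :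
    MinimalAction G T' := by
  intro Y' hne hconv hinv
  have hpre : p ⁻¹' Y' = Set.univ := by
    refine hmin _ (hne.preimage hsurj) (fun u hu v hv w hw => hconv _ hu _ hv (halign u w v hw))
      fun g => Set.ext fun u => ?_
    rw [Set.mem_smul_set_iff_inv_smul_mem, Set.mem_preimage, Set.mem_preimage, hequiv,
      ← Set.mem_smul_set_iff_inv_smul_mem, hinv]
  rw [← Set.univ_subset_iff, ← hsurj.range_eq]
  exact Set.preimage_eq_univ_iff.1 hpre

theorem stmt_18_general {G T T' : Type*} [Group G] [MetricSpace T] [MetricSpace T']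
    [RealTree T] [RealTree T'] [MulAction G T] [MulAction G T']
    (Ys : Set (Set T)) (htc : TransverseCovering G Ys)
    (Ys' : Set (Set T))
    (p : T → T') (hsurj : Function.Surjective p)
    (hequiv : ∀ (g : G) (x : T), p (g • x) = g • p x)
    (hiso : ∀ Y ∈ Ys \ Ys', ∀ x ∈ Y, ∀ y ∈ Y, dist (p x) (p y) = dist x y)
    (hfib : ∀ x y : T, p x = p y ↔ (x = y ∨ seg x y ⊆ ⋃₀ Ys')) :
    (∀ x y z : T, MBtw x y z → MBtw (p x) (p y) (p z)) ∧
      (MinimalAction G T → MinimalAction G T') := by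
  have halign : ∀ x y z : T, MBtw x y z → MBtw (p x) (p y) (p z) := fun x y z hy => by
    have hpy : p y ∈ p '' seg x z := Set.mem_image_of_mem p hy
    rwa [image_seg_eq_of_transverseCovering htc hiso hfib] at hpy
  exact ⟨halign, MinimalAction.of_surjective hsurj hequiv halign⟩

/-- collapsing an invariant subfamily of a transverse covering (graph of
actions) to points yields an alignment-preserving map; hence minimality is preserved.
The collapse map p is characterized by: equivariance, surjectivity, being isometric on
non-collapsed pieces, and identifying x,y exactly when the segment [x,y] is contained in
the union of the collapsed subtrees. -/
theorem stmt_18 {G T T' : Type*} [Group G] [MetricSpace T] [MetricSpace T']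
    [RealTree T] [RealTree T'] [MulAction G T] [MulAction G T']
    (isoT : ∀ g : G, Isometry fun x : T => g • x)
    (isoT' : ∀ g : G, Isometry fun x : T' => g • x)
    (Ys : Set (Set T)) (htc : TransverseCovering G Ys)
    (Ys' : Set (Set T)) (hsub : Ys' ⊆ Ys)
    (hinv : ∀ g : G, ∀ Y ∈ Ys', g • Y ∈ Ys')
    (p : T → T') (hsurj : Function.Surjective p)
    (hequiv : ∀ (g : G) (x : T), p (g • x) = g • p x)
    (hiso : ∀ Y ∈ Ys \ Ys', ∀ x ∈ Y, ∀ y ∈ Y, dist (p x) (p y) = dist x y)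
    (hfib : ∀ x y : T, p x = p y ↔ (x = y ∨ seg x y ⊆ ⋃₀ Ys')) :
    (∀ x y z : T, MBtw x y z → MBtw (p x) (p y) (p z)) ∧
      (MinimalAction G T → MinimalAction G T') :=
  stmt_18_general Ys htc Ys' p hsurj hequiv hiso hfib
end
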